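/- arXiv:1706.00617 — 9 statements merged into one kernel-verified Lean document; each statement's English description precedes it below -/
import Mathlib

section
/- Let T = (V, ω) be a fractional tournament. A vertex ordering π of T is minimum (i.e., its cut vector is coordinatewise less than or equal to the cut vector of every other vertex ordering of T) if and only if π is sorted (i.e., for any pair of distinct vertices u and v, if ω⁻(u) < ω⁻(v) then π(u) < π(v)). -/
open Finset

variable {V : Type*} [Fintype V] [DecidableEq V]

/-- The set of the first `i` vertices in the vertex ordering `π`. -/
def prefixSet (π : V ≃ Fin (Fintype.card V)) (i : ℕ) : Finset V :=
  Finset.univ.filter (fun v => (π v : ℕ) < i)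

/-- The set of the last `n - i` vertices in the vertex ordering `π`. -/
def suffixSet (π : V ≃ Fin (Fintype.card V)) (i : ℕ) : Finset V :=
  Finset.univ.filter (fun v => i ≤ (π v : ℕ))

/-- The cut at position `i`: the arcs from outside the length-`i` prefix into the prefix. -/
def cutFinset (E : V → V → Prop) [DecidableRel E]
    (π : V ≃ Fin (Fintype.card V)) (i : ℕ) : Finset (V × V) :=
  Finset.univ.filter (fun p : V × V => E p.1 p.2 ∧ i ≤ (π p.1 : ℕ) ∧ (π p.2 : ℕ) < i)

/-- The size of the cut at position `i`. -/
def cutSize (E : V → V → Prop) [DecidableRel E]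
    (π : V ≃ Fin (Fintype.card V)) (i : ℕ) : ℕ :=
  (cutFinset E π i).card

/-- The width of a vertex ordering. -/
def widthOf (E : V → V → Prop) [DecidableRel E] (π : V ≃ Fin (Fintype.card V)) : ℕ :=
  (Finset.range (Fintype.card V + 1)).sup (cutSize E π)

/-- The cutwidth of a digraph. -/
noncomputable def cutwidth (E : V → V → Prop) [DecidableRel E] : ℕ :=
  sInf {w | ∃ π : V ≃ Fin (Fintype.card V), widthOf E π = w}

/-- The OLA-cost of a vertex ordering. -/
def olaOf (E : V → V → Prop) [DecidableRel E] (π : V ≃ Fin (Fintype.card V)) : ℕ :=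
  ∑ i ∈ Finset.range (Fintype.card V + 1), cutSize E π i

/-- The OLA-cost of a digraph. -/
noncomputable def ola (E : V → V → Prop) [DecidableRel E] : ℕ :=
  sInf {w | ∃ π : V ≃ Fin (Fintype.card V), olaOf E π = w}

/-- The in-weight of a vertex in a fractional tournament. -/
def wInDeg (ω : V → V → ℝ) (u : V) : ℝ := ∑ v, ω v u

/-- The weight of the cut at position `i` in a fractional tournament. -/
def wCut (ω : V → V → ℝ) (π : V ≃ Fin (Fintype.card V)) (i : ℕ) : ℝ :=
  ∑ p ∈ Finset.univ.filter (fun p : V × V => i ≤ (π p.1 : ℕ) ∧ (π p.2 : ℕ) < i), ω p.1 p.2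

/-- The width of a vertex ordering of a fractional tournament. -/
def wWidth (ω : V → V → ℝ) (π : V ≃ Fin (Fintype.card V)) : ℝ :=
  (Finset.range (Fintype.card V + 1)).sup'
    (Finset.nonempty_range_iff.mpr (Nat.succ_ne_zero _)) (wCut ω π)

/-- The cutwidth of a fractional tournament. -/
noncomputable def wCutwidth (ω : V → V → ℝ) : ℝ :=
  sInf {w : ℝ | ∃ π : V ≃ Fin (Fintype.card V), wWidth ω π = w}

/-- The OLA-cost of a vertex ordering of a fractional tournament. -/
def wOlaOf (ω : V → V → ℝ) (π : V ≃ Fin (Fintype.card V)) : ℝ :=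
  ∑ i ∈ Finset.range (Fintype.card V + 1), wCut ω π i

/-- The OLA-cost of a fractional tournament. -/
noncomputable def wOla (ω : V → V → ℝ) : ℝ :=
  sInf {w : ℝ | ∃ π : V ≃ Fin (Fintype.card V), wOlaOf ω π = w}

lemma prefixSet_card (π : V ≃ Fin (Fintype.card V)) (i : ℕ) :
    (prefixSet π i).card = min i (Fintype.card V) := by
  classical
  have h : prefixSet π i
      = (univ.filter fun j : Fin (Fintype.card V) => (j : ℕ) < i).image π.symm := by
    ext v
    simp only [prefixSet, mem_filter, mem_univ, true_and, Finset.mem_image]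
    constructor
    · intro h; exact ⟨π v, by simpa using h, by simp⟩
    · rintro ⟨a, ha, rfl⟩; simpa using ha
  rw [h, Finset.card_image_of_injective _ π.symm.injective, Finset.card_filter]
  rw [Fin.sum_univ_eq_sum_range (fun j => if j < i then 1 else 0)]
  rw [← Finset.card_filter]
  have : (Finset.range (Fintype.card V)).filter (fun j => j < i)
      = Finset.range (min i (Fintype.card V)) := by
    ext j; simp [lt_min_iff, and_comm]
  rw [this, Finset.card_range]

lemma wCut_eq (ω : V → V → ℝ)
    (hzero : ∀ u : V, ω u u = 0)
    (hsum : ∀ u v : V, u ≠ v → ω u v + ω v u = 1)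
    (π : V ≃ Fin (Fintype.card V)) (i : ℕ) :
    wCut ω π i = (∑ v ∈ prefixSet π i, wInDeg ω v)
      - ((prefixSet π i).card * ((prefixSet π i).card - 1) : ℝ) / 2 := by
  classical
  set P := prefixSet π i with hP
  have hsplit : wCut ω π i
      = ∑ u ∈ univ.filter (fun u => ¬ ((π u : ℕ) < i)), ∑ v ∈ P, ω u v := by
    rw [wCut]
    rw [← Finset.univ_product_univ,
      Finset.filter_product (fun u => i ≤ (π u : ℕ)) (fun v => (π v : ℕ) < i),
      Finset.sum_product]
    congr 1
    ext u
    simp [not_lt]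
  have hD : (∑ u ∈ P, ∑ v ∈ P, ω u v)
      = ((P.card : ℝ) * ((P.card : ℝ) - 1)) / 2 := by
    have h2 : (∑ u ∈ P, ∑ v ∈ P, ω u v) + (∑ u ∈ P, ∑ v ∈ P, ω u v)
        = (P.card : ℝ) * ((P.card : ℝ) - 1) := by
      nth_rewrite 2 [Finset.sum_comm]
      rw [← Finset.sum_add_distrib]
      have : ∀ u ∈ P, (∑ v ∈ P, ω u v + ∑ v ∈ P, ω v u)
          = (P.card : ℝ) - 1 := by
        intro u hu
        rw [← Finset.sum_add_distrib]
        have : ∀ v ∈ P, ω u v + ω v u = (1 : ℝ) - (if u = v then 1 else 0) := by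
          intro v hv
          by_cases h : u = v
          · subst h; simp [hzero]
          · simp [h, hsum u v h]
        rw [Finset.sum_congr rfl this, Finset.sum_sub_distrib]
        rw [Finset.sum_ite_eq P u (fun _ => (1:ℝ))]
        simp [hu]
      rw [Finset.sum_congr rfl this, Finset.sum_const, nsmul_eq_mul]
    linarith
  rw [hsplit]
  have hcompl := Finset.sum_filter_add_sum_filter_not univ (fun u => (π u : ℕ) < i)
    (fun u => ∑ v ∈ P, ω u v)
  have huniv : (∑ u : V, ∑ v ∈ P, ω u v) = ∑ v ∈ P, wInDeg ω v := by
    rw [Finset.sum_comm]; rfl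
  have hfilt : (univ.filter (fun u => (π u : ℕ) < i)) = P := rfl
  rw [hfilt] at hcompl
  rw [huniv] at hcompl
  rw [hD] at hcompl
  linarith

lemma sum_prefix_le (d : V → ℝ) (A B : Finset V) (hcard : A.card = B.card)
    (h : ∀ a ∈ A, ∀ b : V, b ∉ A → d a ≤ d b) :
    ∑ v ∈ A, d v ≤ ∑ v ∈ B, d v := by
  classical
  have hds : (A \ B).card = (B \ A).card := by
    have h1 := Finset.card_sdiff_add_card_inter A B
    have h2 := Finset.card_sdiff_add_card_inter B A
    rw [Finset.inter_comm] at h2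
    omega
  have e : (A \ B : Finset V) ≃ (B \ A : Finset V) := Finset.equivOfCardEq hds
  have key : ∑ v ∈ A \ B, d v ≤ ∑ v ∈ B \ A, d v := by
    rw [← Finset.sum_attach (A \ B) d, ← Finset.sum_attach (B \ A) d]
    have h2 : ∑ a ∈ (A \ B).attach, d (e a).1 = ∑ b ∈ (B \ A).attach, d b.1 := by
      rw [← Finset.univ_eq_attach, ← Finset.univ_eq_attach]
      exact Equiv.sum_comp e (fun b => d b.1)
    rw [← h2]
    refine Finset.sum_le_sum fun a _ => ?_
    have ha : a.1 ∈ A := (Finset.mem_sdiff.mp a.2).1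
    have hb : (e a).1 ∉ A := (Finset.mem_sdiff.mp (e a).2).2
    exact h a.1 ha (e a).1 hb
  have hA : ∑ v ∈ A, d v = ∑ v ∈ A \ B, d v + ∑ v ∈ A ∩ B, d v := by
    rw [← Finset.sum_union (Finset.disjoint_sdiff_inter A B), Finset.sdiff_union_inter]
  have hB : ∑ v ∈ B, d v = ∑ v ∈ B \ A, d v + ∑ v ∈ A ∩ B, d v := by
    rw [Finset.inter_comm, ← Finset.sum_union (Finset.disjoint_sdiff_inter B A),
      Finset.sdiff_union_inter]
  linarith


/-- A vertex ordering of a fractional tournament is minimum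
(its cut vector is coordinatewise at most that of any other ordering)
iff it is sorted (vertices with strictly smaller in-weight come earlier). -/
theorem minimum_iff_sorted (ω : V → V → ℝ)
    (hzero : ∀ u : V, ω u u = 0)
    (hsum : ∀ u v : V, u ≠ v → ω u v + ω v u = 1)
    (hnonneg : ∀ u v : V, 0 ≤ ω u v)
    (π : V ≃ Fin (Fintype.card V)) :
    (∀ (π' : V ≃ Fin (Fintype.card V)) (i : ℕ), wCut ω π i ≤ wCut ω π' i) ↔
      (∀ u v : V, wInDeg ω u < wInDeg ω v → π u < π v) := by

  classical
  constructor
  · intro hmin u v huv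
    by_contra hlt
    have hne : u ≠ v := by rintro rfl; exact lt_irrefl _ huv
    have hvu : (π v : ℕ) < (π u : ℕ) := by
      have h1 : π v ≤ π u := not_lt.mp hlt
      have h2 : π v ≠ π u := fun h => hne (π.injective h.symm)
      exact Fin.lt_iff_val_lt_val.mp (lt_of_le_of_ne h1 h2)
    set π' : V ≃ Fin (Fintype.card V) := (Equiv.swap u v).trans π with hπ'
    set i : ℕ := (π v : ℕ) + 1 with hi
    have hvP : v ∈ prefixSet π i := by simp [prefixSet, hi]
    have huP : u ∉ prefixSet π i := by
      simp only [prefixSet, Finset.mem_filter, Finset.mem_univ, true_and, hi]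
      omega
    have hP' : prefixSet π' i = insert u ((prefixSet π i).erase v) := by
      ext w
      rcases eq_or_ne w u with rfl | hwu
      · simp [prefixSet, hπ', Equiv.swap_apply_left, hi]
      rcases eq_or_ne w v with rfl | hwv
      · simp only [prefixSet, Finset.mem_filter, Finset.mem_univ, true_and, hπ',
          Equiv.trans_apply, Equiv.swap_apply_right, Finset.mem_insert,
          Finset.mem_erase]
        constructor
        · intro h; omega
        · rintro (h | h)
          · exact absurd h hwu
          · exact absurd rfl h.1
      · simp [prefixSet, hπ', Equiv.swap_apply_of_ne_of_ne hwu hwv, hwu, hwv]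
    have huerase : u ∉ (prefixSet π i).erase v := fun h => huP (Finset.mem_of_mem_erase h)
    have hcard : (prefixSet π' i).card = (prefixSet π i).card := by
      rw [hP', Finset.card_insert_of_notMem huerase, Finset.card_erase_of_mem hvP]
      have := Finset.card_pos.mpr ⟨v, hvP⟩
      omega
    have hsum' : ∑ w ∈ prefixSet π' i, wInDeg ω w
        = ∑ w ∈ prefixSet π i, wInDeg ω w - wInDeg ω v + wInDeg ω u := by
      rw [hP', Finset.sum_insert huerase, Finset.sum_erase_eq_sub hvP]
      ring
    have h := hmin π' i
    rw [wCut_eq ω hzero hsum π i, wCut_eq ω hzero hsum π' i, hcard, hsum'] at h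
    linarith
  · intro hsorted π' i
    rw [wCut_eq ω hzero hsum π i, wCut_eq ω hzero hsum π' i]
    have hcard : (prefixSet π i).card = (prefixSet π' i).card := by
      rw [prefixSet_card, prefixSet_card]
    rw [hcard]
    have hle : ∑ v ∈ prefixSet π i, wInDeg ω v ≤ ∑ v ∈ prefixSet π' i, wInDeg ω v := by
      refine sum_prefix_le _ _ _ hcard ?_
      intro a ha b hb
      simp only [prefixSet, Finset.mem_filter, Finset.mem_univ, true_and] at ha hb
      by_contra hc
      have := hsorted b a (not_le.mp hc)
      have : (π b : ℕ) < (π a : ℕ) := this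
      omega
    linarith
end

section
/- Let T be a tournament on n vertices and let π be any vertex ordering of T that sorts the vertices by non-decreasing in-degree (i.e., d⁻(u) < d⁻(v) implies π(u) < π(v)). Then π simultaneously achieves the cutwidth and the OLA-cost of T: ctw(T, π) = ctw(T) and OLA(T, π) = OLA(T). -/
open Finset

variable {V : Type*} [Fintype V] [DecidableEq V]

/-- The in-degree of a vertex. -/
def inDeg (E : V → V → Prop) [DecidableRel E] (u : V) : ℕ :=
  (Finset.univ.filter (fun v => E v u)).card

/-!
In a tournament the `i` vertices of any prefix span exactly `C(i, 2)` arcs, whatever the ordering,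
so the cut at position `i` is the sum of the in-degrees of the prefix minus `C(i, 2)`. Sorting by
in-degree minimises every prefix sum of in-degrees, hence every cut at once, and therefore both
their maximum and their sum.
-/

omit [DecidableEq V] in
theorem card_prefixSet (π : V ≃ Fin (Fintype.card V)) (i : ℕ) :
    #(prefixSet π i) = min (Fintype.card V) i := by
  rw [← Fin.card_filter_val_lt]
  exact card_equiv π (by simp [prefixSet])

theorem Finset.sum_le_sum_of_card_eq_of_forall_le {α β : Type*} [AddCommMonoid β] [LinearOrder β]
    [IsOrderedAddMonoid β] {A B : Finset α} (f : α → β) (hcard : #A = #B)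
    (hle : ∀ a ∈ A, ∀ b ∈ B, f a ≤ f b) : ∑ a ∈ A, f a ≤ ∑ b ∈ B, f b := by
  obtain rfl | ⟨b₀, hb₀, hb₀_min⟩ := B.eq_empty_or_nonempty.imp_right (B.exists_min_image f)
  · simp_all
  calc ∑ a ∈ A, f a ≤ #A • f b₀ := sum_le_card_nsmul _ _ _ fun a ha => hle a ha b₀ hb₀
    _ = #B • f b₀ := by rw [hcard]
    _ ≤ ∑ b ∈ B, f b := card_nsmul_le_sum _ _ _ hb₀_min

theorem sum_prefixSet_le_of_sorted {β : Type*} [AddCommMonoid β] [LinearOrder β]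
    [IsOrderedAddMonoid β] (f : V → β) (π : V ≃ Fin (Fintype.card V))
    (hsorted : ∀ u v : V, f u < f v → π u < π v) (i : ℕ) {S : Finset V}
    (hS : #S = #(prefixSet π i)) : ∑ v ∈ prefixSet π i, f v ≤ ∑ v ∈ S, f v := by
  set P := prefixSet π i
  have hle : ∀ u ∈ P \ S, ∀ v ∈ S \ P, f u ≤ f v := by
    intro u hu v hv
    simp only [P, prefixSet, mem_sdiff, mem_filter, mem_univ, true_and, not_lt] at hu hv
    exact not_lt.mp fun h => (hsorted v u h).not_ge (hu.1.le.trans hv.2)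
  rw [← sum_inter_add_sum_sdiff P S, ← sum_inter_add_sum_sdiff S P, inter_comm]
  gcongr 1
  exact sum_le_sum_of_card_eq_of_forall_le f (card_sdiff_comm hS.symm) hle

section Cuts

variable (E : V → V → Prop) [DecidableRel E]

theorem cutSize_eq_card (π : V ≃ Fin (Fintype.card V)) (i : ℕ) :
    cutSize E π i =
      #{p : V × V | E p.1 p.2 ∧ p.1 ∉ prefixSet π i ∧ p.2 ∈ prefixSet π i} := by
  simp [cutSize, cutFinset, prefixSet]

theorem card_arcs_into_add_card_arcs_within (S : Finset V) :
    #{p : V × V | E p.1 p.2 ∧ p.1 ∉ S ∧ p.2 ∈ S} + #{p ∈ S ×ˢ S | E p.1 p.2} =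
      ∑ v ∈ S, inDeg E v := by
  have hsum : ∑ v ∈ S, inDeg E v = #{p ∈ univ ×ˢ S | E p.1 p.2} := by
    simp only [inDeg, card_filter, sum_product_right]
  rw [hsum, ← card_filter_add_card_filter_not (s := {p ∈ univ ×ˢ S | E p.1 p.2}) (·.1 ∉ S)]
  congr 2 <;> ext p <;> simp only [mem_filter, mem_univ, mem_product, true_and] <;> tauto

omit [Fintype V] [DecidableEq V] in
theorem card_arcs_within_of_tournament (hirr : ∀ u : V, ¬ E u u)
    (htour : ∀ u v : V, u ≠ v → (E u v ↔ ¬ E v u)) (S : Finset V) :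
    #{p ∈ S ×ˢ S | E p.1 p.2} = (#S).choose 2 := by
  set fwd : Finset (V × V) := {p ∈ S ×ˢ S | E p.1 p.2}
  set bwd : Finset (V × V) := {p ∈ S ×ˢ S | E p.2 p.1}
  have disj : Disjoint fwd bwd := by grind [disjoint_left]
  have union : fwd.disjUnion bwd disj = S.offDiag := by grind
  have swap : #fwd = #bwd := card_equiv (Equiv.prodComm V V) (by grind)
  grind [Nat.mul_sub_one, offDiag_card, Nat.choose_two_right]

theorem cutSize_add_choose_eq_sum_inDeg (hirr : ∀ u : V, ¬ E u u)
    (htour : ∀ u v : V, u ≠ v → (E u v ↔ ¬ E v u)) (π : V ≃ Fin (Fintype.card V)) (i : ℕ) :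
    cutSize E π i + (#(prefixSet π i)).choose 2 = ∑ v ∈ prefixSet π i, inDeg E v := by
  rw [cutSize_eq_card, ← card_arcs_within_of_tournament E hirr htour,
    card_arcs_into_add_card_arcs_within]

theorem cutSize_le_of_sorted (hirr : ∀ u : V, ¬ E u u)
    (htour : ∀ u v : V, u ≠ v → (E u v ↔ ¬ E v u)) {π : V ≃ Fin (Fintype.card V)}
    (hsorted : ∀ u v : V, inDeg E u < inDeg E v → π u < π v) (σ : V ≃ Fin (Fintype.card V))
    (i : ℕ) : cutSize E π i ≤ cutSize E σ i := by
  have hcard : #(prefixSet σ i) = #(prefixSet π i) := by simp only [card_prefixSet]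
  have hπ := cutSize_add_choose_eq_sum_inDeg E hirr htour π i
  have hσ := cutSize_add_choose_eq_sum_inDeg E hirr htour σ i
  have hsum := sum_prefixSet_le_of_sorted (inDeg E) π hsorted i hcard
  rw [hcard] at hσ
  omega

omit [DecidableEq V] in
theorem widthOf_eq_cutwidth_of_forall_cutSize_le {π : V ≃ Fin (Fintype.card V)}
    (h : ∀ σ i, cutSize E π i ≤ cutSize E σ i) : widthOf E π = cutwidth E :=
  le_antisymm (le_csInf ⟨_, π, rfl⟩ fun _ ⟨σ, hσ⟩ => hσ ▸ sup_mono_fun fun i _ => h σ i)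
    (Nat.sInf_le ⟨π, rfl⟩)

omit [DecidableEq V] in
theorem olaOf_eq_ola_of_forall_cutSize_le {π : V ≃ Fin (Fintype.card V)}
    (h : ∀ σ i, cutSize E π i ≤ cutSize E σ i) : olaOf E π = ola E :=
  le_antisymm (le_csInf ⟨_, π, rfl⟩ fun _ ⟨σ, hσ⟩ => hσ ▸ sum_le_sum fun i _ => h σ i)
    (Nat.sInf_le ⟨π, rfl⟩)

end Cuts

/-- In a tournament, any ordering sorted by non-decreasing in-degree
simultaneously achieves the cutwidth and the OLA-cost. -/
theorem tournament_sorted_optimal (E : V → V → Prop) [DecidableRel E]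
    (hirr : ∀ u : V, ¬ E u u)
    (htour : ∀ u v : V, u ≠ v → (E u v ↔ ¬ E v u))
    (π : V ≃ Fin (Fintype.card V))
    (hsorted : ∀ u v : V, inDeg E u < inDeg E v → π u < π v) :
    widthOf E π = cutwidth E ∧ olaOf E π = ola E := by
  have hopt := cutSize_le_of_sorted E hirr htour hsorted
  exact ⟨widthOf_eq_cutwidth_of_forall_cutSize_le E hopt,
    olaOf_eq_ola_of_forall_cutSize_le E hopt⟩
end

section
/- Let D be a semi-complete digraph and let π be any vertex ordering of D that sorts the vertices by non-decreasing in-weight in the relaxation T_D of D (i.e., ω⁻_{T_D}(u) < ω⁻_{T_D}(v) implies π(u) < π(v)). Then ctw(D, π) ≤ 2·ctw(D) and OLA(D, π) ≤ 2·OLA(D). -/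
open Finset

variable {V : Type*} [Fintype V] [DecidableEq V]

/-- Sorting the vertices of a semi-complete digraph by non-decreasing
in-weight in its fractional-tournament relaxation yields a `2`-approximation for both
the cutwidth and the OLA-cost. -/
theorem sorted_relaxation_two_approx (E : V → V → Prop) [DecidableRel E]
    (hirr : ∀ u : V, ¬ E u u)
    (hsc : ∀ u v : V, u ≠ v → E u v ∨ E v u)
    (ω : V → V → ℝ)
    (hω : ∀ u v : V, ω u v =
      if u = v then 0 else if E u v then (if E v u then 1 / 2 else 1) else 0)
    (π : V ≃ Fin (Fintype.card V))
    (hsorted : ∀ u v : V, wInDeg ω u < wInDeg ω v → π u < π v) :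
    widthOf E π ≤ 2 * cutwidth E ∧ olaOf E π ≤ 2 * ola E := by
  classical
  -- basic facts about ω
  have hω_le : ∀ u v, ω u v ≤ (if E u v then (1:ℝ) else 0) := by
    intro u v; rw [hω u v]; split_ifs <;> norm_num
  have hω_ge : ∀ u v, (if E u v then (1:ℝ) else 0) ≤ 2 * ω u v := by
    intro u v; rw [hω u v]
    by_cases huv : u = v
    · subst huv; simp [hirr u]
    · simp only [huv, if_false]; split_ifs <;> norm_num
  have hω_sum : ∀ u v : V, u ≠ v → ω u v + ω v u = 1 := by
    intro u v huv
    rw [hω u v, hω v u]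
    rcases hsc u v huv with h | h <;>
      simp only [huv, Ne.symm huv, if_false, h, if_true] <;> split_ifs <;> norm_num
  -- diagonal sums depend only on the cardinality
  have hdiag : ∀ A : Finset V, ∑ u ∈ A, ∑ v ∈ A, ω u v
      = ((A.card : ℝ) * ((A.card : ℝ) - 1)) / 2 := by
    intro A
    have h2 : (2:ℝ) * (∑ u ∈ A, ∑ v ∈ A, ω u v)
        = ∑ u ∈ A, ∑ v ∈ A, (ω u v + ω v u) := by
      simp only [Finset.sum_add_distrib, two_mul]
      congr 1
      exact Finset.sum_comm
    have h3 : ∑ u ∈ A, ∑ v ∈ A, (ω u v + ω v u)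
        = ∑ u ∈ A, ∑ v ∈ A, (if u = v then (0:ℝ) else 1) := by
      apply Finset.sum_congr rfl; intro u _
      apply Finset.sum_congr rfl; intro v _
      by_cases huv : u = v
      · subst huv; simp [hω u u]
      · rw [hω_sum u v huv]; simp [huv]
    have h4 : ∑ u ∈ A, ∑ v ∈ A, (if u = v then (0:ℝ) else 1)
        = (A.card : ℝ) * ((A.card : ℝ) - 1) := by
      rw [Finset.sum_congr rfl (fun u hu => ?_), Finset.sum_const, nsmul_eq_mul]
      have : ∑ v ∈ A, (if u = v then (0:ℝ) else 1)
          = ∑ v ∈ A, ((1:ℝ) - if u = v then 1 else 0) := by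
        apply Finset.sum_congr rfl; intro v _; split_ifs <;> norm_num
      rw [this, Finset.sum_sub_distrib, Finset.sum_const, Finset.sum_ite_eq, if_pos hu,
        nsmul_eq_mul, mul_one]
    rw [h3, h4] at h2
    linarith
  -- prefix cardinalities are independent of the ordering
  have hprecard : ∀ (σ : V ≃ Fin (Fintype.card V)) i, (prefixSet σ i).card
      = (Finset.univ.filter (fun j : Fin (Fintype.card V) => (j:ℕ) < i)).card := by
    intro σ i
    apply Finset.card_bij (fun v _ => σ v)
    · intro a ha; simp only [prefixSet, Finset.mem_filter, Finset.mem_univ, true_and] at ha ⊢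
      exact ha
    · intro a _ b _ h; exact σ.injective h
    · intro j hj
      refine ⟨σ.symm j, ?_, by simp⟩
      simp only [prefixSet, Finset.mem_filter, Finset.mem_univ, true_and, Equiv.apply_symm_apply]
      simpa using hj
  -- suffix is the complement of the prefix
  have hsplitsum : ∀ (σ : V ≃ Fin (Fintype.card V)) i (g : V → ℝ),
      ∑ u ∈ prefixSet σ i, g u + ∑ u ∈ suffixSet σ i, g u = ∑ u, g u := by
    intro σ i g
    have : suffixSet σ i = Finset.univ.filter (fun v => ¬ ((σ v : ℕ) < i)) := by
      ext v; simp [suffixSet, not_lt]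
    rw [this, prefixSet]
    exact Finset.sum_filter_add_sum_filter_not _ _ _
  -- fractional cut formula
  have hW : ∀ (σ : V ≃ Fin (Fintype.card V)) i,
      ∑ u ∈ suffixSet σ i, ∑ v ∈ prefixSet σ i, ω u v
      = (∑ v ∈ prefixSet σ i, wInDeg ω v)
        - ∑ u ∈ prefixSet σ i, ∑ v ∈ prefixSet σ i, ω u v := by
    intro σ i
    have h1 : ∑ v ∈ prefixSet σ i, wInDeg ω v
        = ∑ v ∈ prefixSet σ i, (∑ u ∈ prefixSet σ i, ω u v + ∑ u ∈ suffixSet σ i, ω u v) := by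
      apply Finset.sum_congr rfl; intro v _
      rw [hsplitsum σ i (fun u => ω u v)]; rfl
    rw [h1, Finset.sum_add_distrib]
    rw [Finset.sum_comm (s := prefixSet σ i) (t := prefixSet σ i),
      Finset.sum_comm (s := prefixSet σ i) (t := suffixSet σ i)]
    ring
  -- the sorted prefix minimizes the in-weight sum among sets of the same size
  have hmin : ∀ i (A : Finset V), A.card = (prefixSet π i).card →
      ∑ v ∈ prefixSet π i, wInDeg ω v ≤ ∑ v ∈ A, wInDeg ω v := by
    intro i A hA
    set B := prefixSet π i with hB
    have key : ∀ b ∈ B \ A, ∀ a ∈ A \ B, wInDeg ω b ≤ wInDeg ω a := by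
      intro b hb a ha
      by_contra h
      push_neg at h
      have hlt := hsorted a b h
      rw [Finset.mem_sdiff] at hb ha
      have hb' : (π b : ℕ) < i := by
        have := hb.1; simpa [hB, prefixSet] using this
      have ha' : ¬ (π a : ℕ) < i := by
        have := ha.2; simpa [hB, prefixSet] using this
      have : (π a : ℕ) < (π b : ℕ) := hlt
      omega
    have hcards : (B \ A).card = (A \ B).card := Finset.card_sdiff_comm hA.symm
    have hsub : ∑ v ∈ B \ A, wInDeg ω v ≤ ∑ v ∈ A \ B, wInDeg ω v := by
      rcases Finset.eq_empty_or_nonempty (A \ B) with hne | hne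
      · have : (B \ A) = ∅ := Finset.card_eq_zero.mp (by rw [hcards, hne]; simp)
        rw [this, hne]
      · obtain ⟨a0, ha0, ha0min⟩ := Finset.exists_min_image (A \ B) (wInDeg ω) hne
        calc ∑ v ∈ B \ A, wInDeg ω v ≤ (B \ A).card • wInDeg ω a0 :=
              Finset.sum_le_card_nsmul _ _ _ (fun b hb => key b hb a0 ha0)
          _ = (A \ B).card • wInDeg ω a0 := by rw [hcards]
          _ ≤ ∑ v ∈ A \ B, wInDeg ω v := Finset.card_nsmul_le_sum _ _ _ ha0min
    calc ∑ v ∈ B, wInDeg ω v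
        = ∑ v ∈ B ∩ A, wInDeg ω v + ∑ v ∈ B \ A, wInDeg ω v :=
          (Finset.sum_inter_add_sum_sdiff B A _).symm
      _ ≤ ∑ v ∈ B ∩ A, wInDeg ω v + ∑ v ∈ A \ B, wInDeg ω v := by linarith
      _ = ∑ v ∈ A ∩ B, wInDeg ω v + ∑ v ∈ A \ B, wInDeg ω v := by rw [Finset.inter_comm]
      _ = ∑ v ∈ A, wInDeg ω v := Finset.sum_inter_add_sum_sdiff A B _
  -- cut size as an indicator sum
  have hcutsum : ∀ (σ : V ≃ Fin (Fintype.card V)) i, (cutSize E σ i : ℝ)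
      = ∑ u ∈ suffixSet σ i, ∑ v ∈ prefixSet σ i, (if E u v then (1:ℝ) else 0) := by
    intro σ i
    rw [cutSize]
    have hset : cutFinset E σ i
        = (suffixSet σ i ×ˢ prefixSet σ i).filter (fun p => E p.1 p.2) := by
      ext p
      simp only [cutFinset, Finset.mem_filter, Finset.mem_univ, true_and, Finset.mem_product,
        suffixSet, prefixSet]
      tauto
    rw [hset, Finset.card_filter, Finset.sum_product]
    push_cast
    rfl
  -- pointwise two-approximation
  have hpoint : ∀ (σ : V ≃ Fin (Fintype.card V)) i,
      cutSize E π i ≤ 2 * cutSize E σ i := by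
    intro σ i
    have hcardeq : (prefixSet σ i).card = (prefixSet π i).card := by
      rw [hprecard σ i, hprecard π i]
    have hR : (cutSize E π i : ℝ) ≤ 2 * (cutSize E σ i : ℝ) := by
      calc (cutSize E π i : ℝ)
          = ∑ u ∈ suffixSet π i, ∑ v ∈ prefixSet π i, (if E u v then (1:ℝ) else 0) :=
            hcutsum π i
        _ ≤ ∑ u ∈ suffixSet π i, ∑ v ∈ prefixSet π i, 2 * ω u v :=
            Finset.sum_le_sum (fun u _ => Finset.sum_le_sum (fun v _ => hω_ge u v))
        _ = 2 * ∑ u ∈ suffixSet π i, ∑ v ∈ prefixSet π i, ω u v := by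
            rw [Finset.mul_sum]; exact Finset.sum_congr rfl (fun u _ => (Finset.mul_sum _ _ _).symm)
        _ ≤ 2 * ∑ u ∈ suffixSet σ i, ∑ v ∈ prefixSet σ i, ω u v := by
            have h1 := hW π i
            have h2 := hW σ i
            have h3 := hdiag (prefixSet π i)
            have h4 := hdiag (prefixSet σ i)
            have h5 := hmin i (prefixSet σ i) hcardeq
            rw [hcardeq] at h4
            linarith
        _ ≤ 2 * ∑ u ∈ suffixSet σ i, ∑ v ∈ prefixSet σ i, (if E u v then (1:ℝ) else 0) := by
            have := Finset.sum_le_sum (s := suffixSet σ i)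
              (fun u (_ : u ∈ suffixSet σ i) =>
                Finset.sum_le_sum (s := prefixSet σ i) (fun v _ => hω_le u v))
            linarith
        _ = 2 * (cutSize E σ i : ℝ) := by rw [hcutsum σ i]
    exact_mod_cast hR
  constructor
  · have hne : {w | ∃ σ : V ≃ Fin (Fintype.card V), widthOf E σ = w}.Nonempty :=
      ⟨widthOf E π, π, rfl⟩
    obtain ⟨σ, hσ⟩ := Nat.sInf_mem hne
    rw [widthOf]
    apply Finset.sup_le
    intro i hi
    calc cutSize E π i ≤ 2 * cutSize E σ i := hpoint σ i
      _ ≤ 2 * widthOf E σ := Nat.mul_le_mul_left 2 (Finset.le_sup hi)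
      _ = 2 * cutwidth E := by unfold cutwidth; rw [hσ]
  · have hne : {w | ∃ σ : V ≃ Fin (Fintype.card V), olaOf E σ = w}.Nonempty :=
      ⟨olaOf E π, π, rfl⟩
    obtain ⟨σ, hσ⟩ := Nat.sInf_mem hne
    rw [olaOf]
    calc ∑ i ∈ Finset.range (Fintype.card V + 1), cutSize E π i
        ≤ ∑ i ∈ Finset.range (Fintype.card V + 1), 2 * cutSize E σ i :=
          Finset.sum_le_sum (fun i _ => hpoint σ i)
      _ = 2 * olaOf E σ := by rw [olaOf, Finset.mul_sum]
      _ = 2 * ola E := by unfold ola; rw [hσ]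
end

section
/- Let D be a finite simple digraph and let C_1, …, C_p be the vertex sets of its strongly connected components. Then OLA(D) = OLA(D[C_1]) + OLA(D[C_2]) + … + OLA(D[C_p]). -/
open Finset

variable {V : Type*} [Fintype V] [DecidableEq V]

/-- Two vertices are mutually reachable by directed paths. -/
def MutReach (E : V → V → Prop) (u v : V) : Prop :=
  Relation.ReflTransGen E u v ∧ Relation.ReflTransGen E v u

/-- The strongly connected component of a vertex `v`. -/
noncomputable def sccOf (E : V → V → Prop) (v : V) : Finset V :=
  @Finset.filter V (fun u => MutReach E u v) (Classical.decPred _) Finset.univ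

/-- The set of strongly connected components of a digraph. -/
noncomputable def sccs (E : V → V → Prop) : Finset (Finset V) :=
  Finset.univ.image (sccOf E)

/-- The OLA-cost of the subdigraph induced by a set `X` of vertices. -/
noncomputable def olaOn (E : V → V → Prop) [inst : DecidableRel E] (X : Finset V) : ℕ :=
  letI : DecidableRel (fun a b : {x // x ∈ X} => E a.1 b.1) := fun a b => inst a.1 b.1
  ola (fun a b : {x // x ∈ X} => E a.1 b.1)


/-! Summing the cut sizes arc by arc, the cost of an ordering `π` is `∑ (π u - π v)` over the
arcs `u → v` (truncated subtraction, so only backward arcs count), and `π u - π v` is the number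
of vertices `w` with `π v ≤ π w < π u`. Restricting an ordering to a block of vertices can only
shrink these numbers, so for every partition the costs of the blocks add up to at most `OLA(D)`.
Conversely, if the blocks are linearly ordered so that no arc goes back to an earlier block,
concatenating optimal orderings of the blocks makes arcs between blocks free and keeps the
numbers for arcs inside a block. The strongly connected components admit such an order: arcs
only enlarge ancestor sets, two vertices have the same ancestors iff they are strongly connected,
and any linear extension of inclusion of ancestor sets orders the components. -/

open Function

theorem card_filter_subtype {α : Type*} (B : Finset α) (p : α → Prop) [DecidablePred p] :
    #{w : B | p w} = #{w ∈ B | p w} := by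
  rw [← card_map (Embedding.subtype _)]
  congr 1
  ext w
  simp [and_comm]

theorem sum_coe_sort_sum_coe_sort {α M : Type*} [AddCommMonoid M] (B : Finset α)
    (F : α → α → M) : ∑ a : B, ∑ b : B, F a b = ∑ a ∈ B, ∑ b ∈ B, F a b := by
  rw [← sum_coe_sort B]
  exact sum_congr rfl fun a _ => sum_coe_sort B (F a)

theorem toLex_le_and_lt_toLex_iff {ι β : Type*} [LinearOrder ι] [Preorder β] {i j : ι}
    {m k n : β} :
    toLex (i, m) ≤ toLex (j, k) ∧ toLex (j, k) < toLex (i, n) ↔ j = i ∧ m ≤ k ∧ k < n := by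
  simp only [Prod.Lex.toLex_le_toLex, Prod.Lex.toLex_lt_toLex]
  rcases lt_trichotomy j i with h | rfl | h
  · simp [h.ne, h.ne', h.not_gt]
  · simp
  · simp [h.ne', h.not_gt]

section Orderings

variable {α ι : Type*} [Fintype α]

theorem val_sub_val_eq_card {n : ℕ} (π : α ≃ Fin n) (u v : α) :
    (π u : ℕ) - π v = #{w | π v ≤ π w ∧ π w < π u} := by
  rw [← Fin.card_Ico, ← card_map π.symm.toEmbedding]
  congr 1
  ext w
  simp

theorem exists_equivFin_sub_eq_card {β : Type*} [LinearOrder β] (key : α → β)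
    (hkey : Injective key) : ∃ π : α ≃ Fin (Fintype.card α),
      ∀ u v, (π u : ℕ) - π v = #{w | key v ≤ key w ∧ key w < key u} := by
  let : LinearOrder α := LinearOrder.lift' key hkey
  let π := (Fintype.orderIsoFinOfCardEq α rfl).symm
  refine ⟨π.toEquiv, fun u v => ?_⟩
  rw [val_sub_val_eq_card]
  simp only [RelIso.coe_fn_toEquiv, π.le_iff_le, π.lt_iff_lt]
  rfl

theorem exists_equivFin_restrict_sub_le {n : ℕ} (π : α ≃ Fin n) (B : Finset α) :
    ∃ σ : B ≃ Fin (Fintype.card B), ∀ a b, (σ a : ℕ) - σ b ≤ (π a : ℕ) - π b := by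
  obtain ⟨σ, hσ⟩ :=
    exists_equivFin_sub_eq_card (fun a : B => π a) (π.injective.comp Subtype.val_injective)
  refine ⟨σ, fun a b => ?_⟩
  rw [hσ, val_sub_val_eq_card, card_filter_subtype B (fun w => π b ≤ π w ∧ π w < π a)]
  exact card_le_card (filter_subset_filter _ (subset_univ B))

theorem exists_equivFin_concat [LinearOrder ι] (c : α → ι)
    (τ : ∀ i, ({v | c v = i} : Finset α) ≃ Fin (Fintype.card ({v | c v = i} : Finset α))) :
    ∃ ρ : α ≃ Fin (Fintype.card α), (∀ u v, c u < c v → ρ u ≤ ρ v) ∧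
      ∀ i (a b : ({v | c v = i} : Finset α)), (ρ a : ℕ) - ρ b = (τ i a : ℕ) - τ i b := by
  let pos (v : α) : ℕ := τ (c v) ⟨v, by simp⟩
  have hpos (i) (a : ({v | c v = i} : Finset α)) : pos a = τ i a := by
    obtain ⟨a, ha⟩ := a
    obtain rfl : c a = i := (mem_filter.1 ha).2
    rfl
  let key (v : α) : ι ×ₗ ℕ := toLex (c v, pos v)
  have hkey : Injective key := by
    intro u v huv
    obtain ⟨hc, hp⟩ := Prod.ext_iff.1 (toLex.injective huv)
    have := hpos (c v) ⟨u, by simpa using hc⟩ ▸ hpos (c v) ⟨v, by simp⟩ ▸ hp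
    simpa using (τ (c v)).injective (Fin.ext this)
  obtain ⟨ρ, hρ⟩ := exists_equivFin_sub_eq_card key hkey
  refine ⟨ρ, fun u v huv => ?_, fun i a b => ?_⟩
  · have hlt : key u < key v := Prod.Lex.toLex_lt_toLex.2 (Or.inl huv)
    rw [Fin.le_def, ← Nat.sub_eq_zero_iff_le, hρ, card_eq_zero, filter_eq_empty_iff]
    exact fun w _ hw => lt_irrefl _ ((hw.1.trans_lt hw.2).trans hlt)
  · have hbetween (w : α) :
        key b ≤ key w ∧ key w < key a ↔ c w = i ∧ pos b ≤ pos w ∧ pos w < pos a := by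
      simpa only [key, (mem_filter.1 a.2).2, (mem_filter.1 b.2).2] using toLex_le_and_lt_toLex_iff
    rw [hρ, val_sub_val_eq_card (τ i)]
    calc #{w | key b ≤ key w ∧ key w < key a}
        = #{w ∈ ({v | c v = i} : Finset α) | pos b ≤ pos w ∧ pos w < pos a} := by
          simp only [hbetween, filter_filter]
      _ = #{w : ({v | c v = i} : Finset α) | pos b ≤ pos w ∧ pos w < pos a} :=
          (card_filter_subtype _ (fun w => pos b ≤ pos w ∧ pos w < pos a)).symm
      _ = #{w | τ i b ≤ τ i w ∧ τ i w < τ i a} := by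
          simp only [hpos, Fin.le_def, Fin.lt_def]

end Orderings

section Ola

variable {α : Type*} [Fintype α] (E : α → α → Prop) [DecidableRel E]

theorem ola_le_olaOf (π : α ≃ Fin (Fintype.card α)) : ola E ≤ olaOf E π :=
  Nat.sInf_le ⟨π, rfl⟩

theorem exists_olaOf_eq_ola : ∃ π : α ≃ Fin (Fintype.card α), olaOf E π = ola E :=
  Nat.sInf_mem (s := {w | ∃ π, olaOf E π = w}) ⟨_, Fintype.equivFin α, rfl⟩

theorem olaOf_eq_sum_sub (π : α ≃ Fin (Fintype.card α)) :
    olaOf E π = ∑ u, ∑ v, if E u v then (π u : ℕ) - π v else 0 := by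
  have hcut (u v : α) :
      #{i ∈ range (Fintype.card α + 1) | i ≤ (π u : ℕ) ∧ (π v : ℕ) < i} = (π u : ℕ) - π v := by
    rw [← Nat.card_Ioc]
    congr 1
    ext i
    simp only [mem_filter, mem_range, mem_Ioc]
    have := (π u).isLt
    omega
  simp only [olaOf, cutSize, cutFinset, card_filter, ← Fintype.sum_prod_type']
  rw [sum_comm]
  refine sum_congr rfl fun p _ => ?_
  split_ifs with h
  · simp only [h, true_and]
    rw [← hcut, card_filter]
  · simp [h]

theorem olaOn_le_sum_sub (π : α ≃ Fin (Fintype.card α)) (B : Finset α) :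
    olaOn E B ≤ ∑ a ∈ B, ∑ b ∈ B, if E a b then (π a : ℕ) - π b else 0 := by
  obtain ⟨σ, hσ⟩ := exists_equivFin_restrict_sub_le π B
  calc olaOn E B ≤ olaOf (fun a b : B => E a b) σ := ola_le_olaOf _ σ
    _ = ∑ a : B, ∑ b : B, if E a b then (σ a : ℕ) - σ b else 0 := olaOf_eq_sum_sub _ σ
    _ ≤ ∑ a : B, ∑ b : B, if E a b then (π a : ℕ) - π b else 0 := by
      gcongr with a _ b
      split_ifs
      exacts [hσ a b, le_rfl]
    _ = _ := sum_coe_sort_sum_coe_sort B (fun a b => if E a b then (π a : ℕ) - π b else 0)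

end Ola

section Fibers

variable {α ι : Type*} [Fintype α]

theorem sum_image_sum_fiber_sum_fiber {M : Type*} [AddCommMonoid M] [DecidableEq ι]
    (c : α → ι) (F : α → α → M) :
    ∑ i ∈ univ.image c, ∑ a ∈ {v | c v = i}, ∑ b ∈ {v | c v = i}, F a b
      = ∑ u, ∑ v ∈ {v | c v = c u}, F u v := by
  rw [← sum_fiberwise_of_maps_to fun u _ => mem_image_of_mem c (mem_univ u)]
  refine sum_congr rfl fun i _ => sum_congr rfl fun a ha => ?_
  rw [(mem_filter.1 ha).2]

theorem sum_image_fiber {M : Type*} [AddCommMonoid M] [DecidableEq α] [DecidableEq ι]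
    (c : α → ι) (f : Finset α → M) :
    ∑ i ∈ univ.image c, f {v | c v = i}
      = ∑ B ∈ univ.image fun u => ({v | c v = c u} : Finset α), f B := by
  have hinj : Set.InjOn (fun i => ({v | c v = i} : Finset α)) (univ.image c) := by
    intro i hi j _ hij
    obtain ⟨u, -, rfl⟩ := mem_image.1 hi
    have hu : u ∈ ({v | c v = c u} : Finset α) := by simp
    simpa [hij] using hu
  rw [← sum_image hinj, image_image]
  rfl

variable (E : α → α → Prop) [DecidableRel E]

theorem sum_olaOn_fibers_le_ola [DecidableEq ι] (c : α → ι) :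
    ∑ i ∈ univ.image c, olaOn E {v | c v = i} ≤ ola E := by
  obtain ⟨π, hπ⟩ := exists_olaOf_eq_ola E
  let F (u v : α) : ℕ := if E u v then (π u : ℕ) - π v else 0
  calc ∑ i ∈ univ.image c, olaOn E {v | c v = i}
      ≤ ∑ i ∈ univ.image c, ∑ a ∈ {v | c v = i}, ∑ b ∈ {v | c v = i}, F a b :=
        sum_le_sum fun i _ => olaOn_le_sum_sub E π _
    _ = ∑ u, ∑ v ∈ {v | c v = c u}, F u v := sum_image_sum_fiber_sum_fiber c F
    _ ≤ ∑ u, ∑ v, F u v := sum_le_sum fun u _ => sum_le_sum_of_subset (subset_univ _)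
    _ = ola E := by rw [← olaOf_eq_sum_sub, hπ]

theorem ola_le_sum_olaOn_fibers [LinearOrder ι] (c : α → ι)
    (hc : ∀ u v, E u v → c u ≤ c v) :
    ola E ≤ ∑ i ∈ univ.image c, olaOn E {v | c v = i} := by
  choose τ hτ using fun i => exists_olaOf_eq_ola (fun a b : ({v | c v = i} : Finset α) => E a b)
  obtain ⟨ρ, hρc, hρτ⟩ := exists_equivFin_concat c τ
  let F (u v : α) : ℕ := if E u v then (ρ u : ℕ) - ρ v else 0
  have hcross (u v : α) (hv : c v ≠ c u) : F u v = 0 := by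
    by_cases h : E u v
    · simp only [F, if_pos h]
      exact Nat.sub_eq_zero_of_le (hρc u v ((hc u v h).lt_of_ne hv.symm))
    · simp only [F, if_neg h]
  calc ola E ≤ olaOf E ρ := ola_le_olaOf E ρ
    _ = ∑ u, ∑ v, F u v := olaOf_eq_sum_sub E ρ
    _ = ∑ u, ∑ v ∈ {v | c v = c u}, F u v := by
      refine sum_congr rfl fun u _ => (sum_subset (subset_univ _) fun v _ hv => ?_).symm
      exact hcross u v (by simpa using hv)
    _ = ∑ i ∈ univ.image c, ∑ a ∈ {v | c v = i}, ∑ b ∈ {v | c v = i}, F a b :=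
      (sum_image_sum_fiber_sum_fiber c F).symm
    _ = ∑ i ∈ univ.image c, olaOn E {v | c v = i} := by
      refine sum_congr rfl fun i _ => ?_
      rw [← sum_coe_sort_sum_coe_sort]
      refine Eq.trans ?_ (hτ i)
      rw [olaOf_eq_sum_sub]
      simp only [F, hρτ]

theorem ola_eq_sum_olaOn_fibers [LinearOrder ι] (c : α → ι)
    (hc : ∀ u v, E u v → c u ≤ c v) :
    ola E = ∑ i ∈ univ.image c, olaOn E {v | c v = i} :=
  (ola_le_sum_olaOn_fibers E c hc).antisymm (sum_olaOn_fibers_le_ola E c)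

end Fibers

section Reachability

variable {α : Type*} [Fintype α] {E : α → α → Prop} {u v : α}

open Classical in
noncomputable def ancestors (E : α → α → Prop) (v : α) : Finset α :=
  {u | Relation.ReflTransGen E u v}

theorem mem_ancestors {w : α} : w ∈ ancestors E v ↔ Relation.ReflTransGen E w v := by
  simp [ancestors]

theorem ancestors_subset_of_rel (h : E u v) : ancestors E u ⊆ ancestors E v :=
  fun _ hw => mem_ancestors.2 ((mem_ancestors.1 hw).tail h)

theorem ancestors_eq_ancestors_iff : ancestors E u = ancestors E v ↔ MutReach E u v := by
  refine ⟨fun h => ⟨?_, ?_⟩, fun h => ?_⟩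
  · exact mem_ancestors.1 (h ▸ mem_ancestors.2 .refl)
  · exact mem_ancestors.1 (h ▸ mem_ancestors.2 .refl)
  · ext w
    simp only [mem_ancestors]
    exact ⟨fun hw => hw.trans h.1, fun hw => hw.trans h.2⟩

end Reachability

theorem ola_eq_sum_sccs_general (E : V → V → Prop) [DecidableRel E] :
    ola E = ∑ C ∈ sccs E, olaOn E C := by
  let c (v : V) : LinearExtension (Finset V) := toLinearExtension (ancestors E v)
  have hc (u v : V) (h : E u v) : c u ≤ c v :=
    toLinearExtension.monotone (ancestors_subset_of_rel h)
  have hfiber (u : V) : ({v | c v = c u} : Finset V) = sccOf E u := by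
    ext v
    simp only [mem_filter, mem_univ, true_and, sccOf]
    exact ancestors_eq_ancestors_iff
  rw [ola_eq_sum_olaOn_fibers E c hc, sum_image_fiber, sccs]
  simp only [hfiber]

/-- The OLA-cost of a finite simple digraph is the sum of the
OLA-costs of the subdigraphs induced by its strongly connected components. -/
theorem ola_eq_sum_sccs (E : V → V → Prop) [DecidableRel E]
    (hirr : ∀ v : V, ¬ E v v) :
    ola E = ∑ C ∈ sccs E, olaOn E C :=
  ola_eq_sum_sccs_general E
end

section
/- Let D be a finite simple digraph and let W ⊆ V(D) be the set of vertices of D that lie in strongly connected components of size at least 2. Then 2·OLA(D) ≥ |W|. In particular, if every strongly connected component of D has at least two vertices, then 2·OLA(D) ≥ |V(D)|. -/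
open Finset

variable {V : Type*} [Fintype V] [DecidableEq V]

/-- If `W` is the set of vertices lying in strongly connected components
of size at least two, then `2 · OLA(D) ≥ |W|`. In particular, if every strongly connected
component has at least two vertices, then `2 · OLA(D) ≥ |V(D)|`. -/
theorem ola_lower_bound_nontrivial_sccs (E : V → V → Prop) [DecidableRel E]
    (hirr : ∀ v : V, ¬ E v v)
    (W : Finset V)
    (hW : ∀ v : V, v ∈ W ↔ ∃ u : V, u ≠ v ∧ MutReach E u v) :
    W.card ≤ 2 * ola E ∧
      ((∀ v : V, ∃ u : V, u ≠ v ∧ MutReach E u v) → Fintype.card V ≤ 2 * ola E) := by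
  classical
  have cross : ∀ (π : V ≃ Fin (Fintype.card V)) (i : ℕ) (a b : V),
      Relation.ReflTransGen E b a → i ≤ (π b : ℕ) → (π a : ℕ) < i →
      (cutFinset E π i).Nonempty := by
    intro π i a b h hb ha
    revert ha
    induction h with
    | refl => intro ha; omega
    | @tail c d h' e ih =>
      intro hd
      by_cases hc : (π c : ℕ) < i
      · exact ih hc
      · refine ⟨(c, d), ?_⟩
        simp only [cutFinset, Finset.mem_filter, Finset.mem_univ, true_and]
        exact ⟨e, by omega, hd⟩
  have key : ∀ π : V ≃ Fin (Fintype.card V), W.card ≤ 2 * olaOf E π := by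
    intro π
    have hpos : ∀ v ∈ W, ∃ i, i ∈ Finset.range (Fintype.card V + 1) ∧
        (cutFinset E π i).Nonempty ∧ ((π v : ℕ) = i ∨ (π v : ℕ) + 1 = i) := by
      intro v hv
      obtain ⟨u, hu, h1, h2⟩ := (hW v).mp hv
      have hne : (π u : ℕ) ≠ (π v : ℕ) := by
        intro h; exact hu (π.injective (Fin.ext h))
      have hvlt : (π v : ℕ) < Fintype.card V := (π v).isLt
      rcases lt_or_gt_of_ne hne with hlt | hgt
      · exact ⟨(π v : ℕ), Finset.mem_range.mpr (by omega),
          cross π _ u v h2 le_rfl hlt, Or.inl rfl⟩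
      · exact ⟨(π v : ℕ) + 1, Finset.mem_range.mpr (by omega),
          cross π _ v u h1 (by omega) (by omega), Or.inr rfl⟩
    choose f hf1 hf2 hf3 using hpos
    set g : V → ℕ := fun v => if h : v ∈ W then f v h else 0 with hg
    set T : Finset ℕ := (Finset.range (Fintype.card V + 1)).filter
      (fun i => (cutFinset E π i).Nonempty) with hT
    have hmaps : ∀ v ∈ W, g v ∈ T := by
      intro v hv
      simp only [hg, dif_pos hv, hT, Finset.mem_filter]
      exact ⟨hf1 v hv, hf2 v hv⟩
    have hfib : ∀ b ∈ T, (W.filter (fun v => g v = b)).card ≤ 2 := by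
      intro b _
      have hmapsto : ∀ v ∈ W.filter (fun v => g v = b),
          (π v : ℕ) ∈ ({b, b - 1} : Finset ℕ) := by
        intro v hv
        rw [Finset.mem_filter] at hv
        obtain ⟨hvW, hgv⟩ := hv
        have := hf3 v hvW
        rw [hg] at hgv
        simp only [dif_pos hvW] at hgv
        simp only [Finset.mem_insert, Finset.mem_singleton]
        omega
      have hinj : Set.InjOn (fun v => ((π v : ℕ)))
          (W.filter (fun v => g v = b)) := by
        intro x _ y _ hxy
        exact π.injective (Fin.ext hxy)
      calc (W.filter (fun v => g v = b)).card
          ≤ ({b, b - 1} : Finset ℕ).card :=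
            Finset.card_le_card_of_injOn _ hmapsto hinj
        _ ≤ 2 := by
            refine le_trans (Finset.card_insert_le _ _) ?_
            simp
    have h1 : W.card ≤ 2 * T.card :=
      Finset.card_le_mul_card_image_of_maps_to hmaps 2 hfib
    have h2 : T.card ≤ olaOf E π := by
      rw [olaOf]
      calc T.card = ∑ _i ∈ T, 1 := by simp
        _ ≤ ∑ i ∈ T, cutSize E π i := by
            refine Finset.sum_le_sum ?_
            intro i hi
            rw [hT, Finset.mem_filter] at hi
            exact Finset.card_pos.mpr hi.2
        _ ≤ ∑ i ∈ Finset.range (Fintype.card V + 1), cutSize E π i :=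
            Finset.sum_le_sum_of_subset (Finset.filter_subset _ _)
    exact h1.trans (Nat.mul_le_mul_left 2 h2)
  have hne : {w | ∃ π : V ≃ Fin (Fintype.card V), olaOf E π = w}.Nonempty :=
    ⟨olaOf E (Fintype.equivFin V), Fintype.equivFin V, rfl⟩
  obtain ⟨π, hπ⟩ := Nat.sInf_mem hne
  have hmain : W.card ≤ 2 * ola E := by
    rw [ola, ← hπ]; exact key π
  refine ⟨hmain, fun h => ?_⟩
  have : (Finset.univ : Finset V) ⊆ W := fun v _ => (hW v).mpr (h v)
  calc Fintype.card V = (Finset.univ : Finset V).card := (Finset.card_univ).symm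
    _ ≤ W.card := Finset.card_le_card this
    _ ≤ 2 * ola E := hmain
end

section
/- Let D_1, D_2, …, D_t be semi-complete digraphs on pairwise disjoint vertex sets, and let D* be the semi-complete digraph obtained from their disjoint union by adding, for all 1 ≤ i < j ≤ t, every arc (u, v) with u ∈ V(D_i) and v ∈ V(D_j). Then ctw(D*) = max_{1 ≤ i ≤ t} ctw(D_i). In particular, for every integer c, ctw(D*) ≤ c if and only if ctw(D_i) ≤ c for all i. -/
open Finset

variable {V : Type*} [Fintype V] [DecidableEq V]

/-- The cutwidth of the subdigraph induced by a set `X` of vertices. -/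
noncomputable def cutwidthOn (E : V → V → Prop) [inst : DecidableRel E] (X : Finset V) : ℕ :=
  letI : DecidableRel (fun a b : {x // x ∈ X} => E a.1 b.1) := fun a b => inst a.1 b.1
  cutwidth (fun a b : {x // x ∈ X} => E a.1 b.1)


/-!
The cut of an ordering at a position depends only on its prefix set. Restricting an ordering of
`D*` to a class `X` gives an ordering of `D*[X]` whose prefixes are traces of prefixes of the
original one, so `ctw(D*[X]) ≤ ctw(D*)`. Conversely, concatenate optimal orderings of the classes
in class order. A prefix of the concatenation consists of all earlier classes and an initial
segment of one class `k`; since arcs between classes only go forward, every arc entering the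
prefix lies inside class `k`, so each cut is a cut of the optimal ordering of class `k`.
-/

section Cuts

variable {α : Type*} [Fintype α] {E : α → α → Prop} [DecidableRel E]

lemma cutSize_le_widthOf (π : α ≃ Fin (Fintype.card α)) {i : ℕ} (hi : i ≤ Fintype.card α) :
    cutSize E π i ≤ widthOf E π :=
  le_sup (mem_range.2 (Nat.lt_succ_of_le hi))

lemma cutwidth_le_widthOf (π : α ≃ Fin (Fintype.card α)) : cutwidth E ≤ widthOf E π :=
  Nat.sInf_le ⟨π, rfl⟩

lemma exists_widthOf_eq_cutwidth (E : α → α → Prop) [DecidableRel E] :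
    ∃ π : α ≃ Fin (Fintype.card α), widthOf E π = cutwidth E :=
  Nat.sInf_mem (s := {w | ∃ π, widthOf E π = w}) ⟨_, Fintype.equivFin α, rfl⟩

variable [DecidableEq α]

def arcsInto (E : α → α → Prop) [DecidableRel E] (S : Finset α) : Finset (α × α) :=
  univ.filter fun p => E p.1 p.2 ∧ p.1 ∉ S ∧ p.2 ∈ S

@[simp]
lemma mem_arcsInto {S : Finset α} {p : α × α} :
    p ∈ arcsInto E S ↔ E p.1 p.2 ∧ p.1 ∉ S ∧ p.2 ∈ S := by
  simp [arcsInto]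

lemma cutSize_eq_card_arcsInto (π : α ≃ Fin (Fintype.card α)) (i : ℕ) :
    cutSize E π i = #(arcsInto E (prefixSet π i)) := by
  simp [cutSize, cutFinset, arcsInto, prefixSet]

lemma widthOf_le_iff {π : α ≃ Fin (Fintype.card α)} {w : ℕ} :
    widthOf E π ≤ w ↔ ∀ i ≤ Fintype.card α, #(arcsInto E (prefixSet π i)) ≤ w := by
  simp [widthOf, Finset.sup_le_iff, cutSize_eq_card_arcsInto]

lemma map_arcsInto_subtype (X S : Finset α) :
    (arcsInto (fun a b : X => E a.1 b.1) (univ.filter fun a : X => a.1 ∈ S)).map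
        ((Function.Embedding.subtype _).prodMap (Function.Embedding.subtype _)) =
      (arcsInto E S).filter fun p => p.1 ∈ X ∧ p.2 ∈ X := by
  ext ⟨u, v⟩
  simp [arcsInto]

lemma card_arcsInto_subtype_le (X S : Finset α) :
    #(arcsInto (fun a b : X => E a.1 b.1) (univ.filter fun a : X => a.1 ∈ S)) ≤
      #(arcsInto E S) := by
  rw [← card_map, map_arcsInto_subtype]
  exact card_filter_le _ _

lemma card_arcsInto_le_subtype {X S : Finset α} (h : ∀ p ∈ arcsInto E S, p.1 ∈ X ∧ p.2 ∈ X) :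
    #(arcsInto E S) ≤
      #(arcsInto (fun a b : X => E a.1 b.1) (univ.filter fun a : X => a.1 ∈ S)) := by
  have := congrArg card (map_arcsInto_subtype (E := E) X S)
  rw [card_map, filter_true_of_mem h] at this
  exact this.ge

end Cuts

def fiber {α ι : Type*} [Fintype α] [DecidableEq ι] (f : α → ι) (k : ι) : Finset α :=
  univ.filter (f · = k)

@[simp]
lemma mem_fiber {α ι : Type*} [Fintype α] [DecidableEq ι] {f : α → ι} {k : ι} {a : α} :
    a ∈ fiber f k ↔ f a = k := by
  simp [fiber]

section Orderings

variable {α : Type*} [Fintype α]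

lemma exists_equivFin_lt_iff {β : Type*} [LinearOrder β] (key : α → β)
    (hkey : Function.Injective key) :
    ∃ π : α ≃ Fin (Fintype.card α), ∀ a b, π a < π b ↔ key a < key b := by
  let : LinearOrder α := LinearOrder.lift' key hkey
  exact ⟨(monoEquivOfFin α rfl).symm.toEquiv, fun a b => (monoEquivOfFin α rfl).symm.lt_iff_lt⟩

lemma exists_equivFin_concat_s7 {ι : Type*} [LinearOrder ι] (f : α → ι)
    (σ : ∀ k, fiber f k ≃ Fin (Fintype.card (fiber f k))) :
    ∃ π : α ≃ Fin (Fintype.card α), (∀ u v, f u < f v → π u < π v) ∧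
      ∀ k (a b : fiber f k), σ k a < σ k b ↔ π a < π b := by
  let key : α → Lex (ι × ℕ) := fun v => toLex (f v, (σ (f v) ⟨v, by simp⟩ : ℕ))
  have key_fiber : ∀ k (a : fiber f k), key a = toLex (k, (σ k a : ℕ)) := by
    rintro k ⟨v, hv⟩
    obtain rfl : f v = k := by simpa using hv
    rfl
  have key_injective : Function.Injective key := by
    intro u v huv
    have hfv : v ∈ fiber f (f u) := by
      simpa using (congrArg (fun x => (ofLex x).1) huv : f u = f v).symm
    have h := huv
    rw [key_fiber (f u) ⟨u, by simp⟩, key_fiber (f u) ⟨v, hfv⟩] at h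
    simpa using (σ (f u)).injective (Fin.ext (congrArg (fun x => (ofLex x).2) h))
  obtain ⟨π, hπ⟩ := exists_equivFin_lt_iff key key_injective
  refine ⟨π, fun u v h => (hπ u v).2 (Prod.Lex.toLex_lt_toLex.2 (Or.inl h)), fun k a b => ?_⟩
  rw [hπ, key_fiber, key_fiber, Prod.Lex.toLex_lt_toLex]
  simp

variable [DecidableEq α]

lemma prefixSet_card_eq (σ : α ≃ Fin (Fintype.card α)) {S : Finset α}
    (hS : ∀ a b, σ a < σ b → b ∈ S → a ∈ S) : prefixSet σ #S = S := by
  have hS' : ∀ a b, σ a ≤ σ b → b ∈ S → a ∈ S := fun a b hle hb => by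
    obtain h | h := hle.eq_or_lt
    · rwa [σ.injective h]
    · exact hS a b h hb
  ext a
  simp only [prefixSet, mem_filter, mem_univ, true_and]
  rw [← card_map σ.toEmbedding]
  constructor
  · intro ha
    by_contra hna
    have : S.map σ.toEmbedding ⊆ Iio (σ a) := fun x hx =>
      mem_Iio.2 (lt_of_not_ge fun hle => hna (hS' a _ (by simpa using hle) (mem_map_equiv.1 hx)))
    simpa using (card_le_card this).trans_lt' ha
  · intro ha
    have : Iic (σ a) ⊆ S.map σ.toEmbedding := fun x hx =>
      mem_map_equiv.2 (hS' _ a (by simpa using hx) ha)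
    simpa using card_le_card this

variable {X : Finset α} {σ : X ≃ Fin (Fintype.card X)} {π : α ≃ Fin (Fintype.card α)}

lemma exists_prefixSet_eq_subtype_prefixSet (hσπ : ∀ a b : X, σ a < σ b ↔ π a < π b) (i : ℕ) :
    ∃ j ≤ Fintype.card X, prefixSet σ j = univ.filter fun a : X => a.1 ∈ prefixSet π i := by
  refine ⟨_, card_le_univ _, prefixSet_card_eq σ fun a b hab hb => ?_⟩
  simp only [prefixSet, mem_filter, mem_univ, true_and] at hb ⊢
  exact lt_trans ((hσπ a b).1 hab) hb

lemma exists_subtype_prefixSet_eq_prefixSet (hσπ : ∀ a b : X, σ a < σ b ↔ π a < π b) {j : ℕ}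
    (hj : j ≤ Fintype.card X) :
    ∃ i ≤ Fintype.card α, prefixSet σ j = univ.filter fun a : X => a.1 ∈ prefixSet π i := by
  obtain hj | rfl := hj.lt_or_eq
  · refine ⟨π (σ.symm ⟨j, hj⟩), (π _).is_lt.le, ?_⟩
    ext a
    have h := hσπ a (σ.symm ⟨j, hj⟩)
    rw [σ.apply_symm_apply] at h
    simp only [prefixSet, mem_filter, mem_univ, true_and]
    exact h
  · refine ⟨Fintype.card α, le_rfl, ?_⟩
    ext a
    simp only [prefixSet, mem_filter, mem_univ, true_and, (σ a).is_lt, (π a).is_lt]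

end Orderings

section Bounds

variable {α : Type*} [Fintype α] [DecidableEq α] {E : α → α → Prop} [DecidableRel E]

lemma cutwidthOn_le_widthOf (X : Finset α) (π : α ≃ Fin (Fintype.card α)) :
    cutwidthOn E X ≤ widthOf E π := by
  obtain ⟨σ, hσπ⟩ :=
    exists_equivFin_lt_iff (fun a : X => π a.1) (π.injective.comp Subtype.val_injective)
  refine (cutwidth_le_widthOf σ).trans (widthOf_le_iff.2 fun j hj => ?_)
  obtain ⟨i, hi, hji⟩ := exists_subtype_prefixSet_eq_prefixSet hσπ hj
  calc #(arcsInto _ (prefixSet σ j))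
      ≤ #(arcsInto E (prefixSet π i)) := hji ▸ card_arcsInto_subtype_le X _
    _ = cutSize E π i := (cutSize_eq_card_arcsInto π i).symm
    _ ≤ widthOf E π := cutSize_le_widthOf π hi

lemma cutwidthOn_le_cutwidth (X : Finset α) : cutwidthOn E X ≤ cutwidth E := by
  obtain ⟨π, hπ⟩ := exists_widthOf_eq_cutwidth E
  exact hπ ▸ cutwidthOn_le_widthOf X π

variable {ι : Type*} [LinearOrder ι]

lemma mem_arcsInto_fiber (f : α → ι) (hcross : ∀ u v, f u < f v → ¬ E v u) {P : Finset α}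
    (hP : ∀ u v, f u < f v → v ∈ P → u ∈ P) {p q : α × α} (hp : p ∈ arcsInto E P)
    (hq : q ∈ arcsInto E P) : f q.1 = f p.1 ∧ f q.2 = f p.1 := by
  have fiber_eq : ∀ r ∈ arcsInto E P, f r.2 = f r.1 := by
    intro r hr
    obtain ⟨hE, hr1, hr2⟩ := mem_arcsInto.1 hr
    rcases lt_trichotomy (f r.2) (f r.1) with h | h | h
    · exact absurd hE (hcross _ _ h)
    · exact h
    · exact absurd (hP _ _ h hr2) hr1
  have hq1 : f q.1 = f p.1 := by
    rcases lt_trichotomy (f q.1) (f p.1) with h | h | h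
    · exact absurd (hP _ _ (h.trans_eq (fiber_eq p hp).symm) (mem_arcsInto.1 hp).2.2)
        (mem_arcsInto.1 hq).2.1
    · exact h
    · exact absurd (hP _ _ (h.trans_eq (fiber_eq q hq).symm) (mem_arcsInto.1 hq).2.2)
        (mem_arcsInto.1 hp).2.1
  exact ⟨hq1, (fiber_eq q hq).trans hq1⟩

lemma cutwidth_le_sup_cutwidthOn [Fintype ι] (f : α → ι)
    (hcross : ∀ u v, f u < f v → ¬ E v u) :
    cutwidth E ≤ univ.sup fun k => cutwidthOn E (fiber f k) := by
  choose σ hσ using fun k => exists_widthOf_eq_cutwidth (fun a b : fiber f k => E a.1 b.1)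
  obtain ⟨π, hπf, hσπ⟩ := exists_equivFin_concat_s7 f σ
  refine (cutwidth_le_widthOf π).trans (widthOf_le_iff.2 fun i _ => ?_)
  obtain h | ⟨p, hp⟩ := (arcsInto E (prefixSet π i)).eq_empty_or_nonempty
  · simp [h]
  have hP : ∀ u v, f u < f v → v ∈ prefixSet π i → u ∈ prefixSet π i := by
    simp only [prefixSet, mem_filter, mem_univ, true_and]
    exact fun u v huv hv => lt_trans (hπf u v huv) hv
  have in_fiber : ∀ q ∈ arcsInto E (prefixSet π i),
      q.1 ∈ fiber f (f p.1) ∧ q.2 ∈ fiber f (f p.1) :=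
    fun q hq => by simpa using mem_arcsInto_fiber f hcross hP hp hq
  obtain ⟨j, hj, hji⟩ := exists_prefixSet_eq_subtype_prefixSet (hσπ (f p.1)) i
  calc #(arcsInto E (prefixSet π i))
      ≤ #(arcsInto _ (prefixSet (σ (f p.1)) j)) := hji ▸ card_arcsInto_le_subtype in_fiber
    _ = cutSize _ (σ (f p.1)) j := (cutSize_eq_card_arcsInto _ j).symm
    _ ≤ widthOf _ (σ (f p.1)) := cutSize_le_widthOf _ hj
    _ = cutwidthOn E (fiber f (f p.1)) := hσ (f p.1)
    _ ≤ _ := le_sup (f := fun k => cutwidthOn E (fiber f k)) (mem_univ _)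

end Bounds

theorem cutwidth_ordered_sum_general (t : ℕ) (E : V → V → Prop) [DecidableRel E]
    (f : V → Fin t)
    (hcross : ∀ u v : V, f u < f v → E u v ∧ ¬ E v u) :
    cutwidth E =
      Finset.univ.sup (fun i : Fin t =>
        cutwidthOn E (Finset.univ.filter (fun v => f v = i))) ∧
    ∀ c : ℕ, (cutwidth E ≤ c ↔
      ∀ i : Fin t, cutwidthOn E (Finset.univ.filter (fun v => f v = i)) ≤ c) := by
  have h : cutwidth E = univ.sup fun i => cutwidthOn E (univ.filter fun v => f v = i) :=
    le_antisymm (cutwidth_le_sup_cutwidthOn f fun u v huv => (hcross u v huv).2)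
      (Finset.sup_le fun i _ => cutwidthOn_le_cutwidth _)
  exact ⟨h, fun c => by rw [h, Finset.sup_le_iff]; simp⟩

/-- If a semi-complete digraph `D*` is partitioned into classes
`f⁻¹(1), …, f⁻¹(t)` so that all arcs between distinct classes go from the smaller-indexed
class to the larger-indexed one (i.e. `D*` is the ordered sum of the semi-complete digraphs
induced by the classes), then `ctw(D*)` is the maximum of the cutwidths of the classes;
in particular `ctw(D*) ≤ c` iff every class has cutwidth at most `c`. -/
theorem cutwidth_ordered_sum (t : ℕ) (E : V → V → Prop) [DecidableRel E]
    (hirr : ∀ v : V, ¬ E v v)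
    (hsc : ∀ u v : V, u ≠ v → E u v ∨ E v u)
    (f : V → Fin t)
    (hcross : ∀ u v : V, f u < f v → E u v ∧ ¬ E v u) :
    cutwidth E =
      Finset.univ.sup (fun i : Fin t =>
        cutwidthOn E (Finset.univ.filter (fun v => f v = i))) ∧
    ∀ c : ℕ, (cutwidth E ≤ c ↔
      ∀ i : Fin t, cutwidthOn E (Finset.univ.filter (fun v => f v = i)) ≤ c) :=
  cutwidth_ordered_sum_general t E f hcross
end

section
/- Let D be a finite simple digraph on n vertices and let π be a vertex ordering of D of width at most c. Then for any integers p ∈ [0, n] and α ≥ 0, there exists a π-milestone m of span α with p − α·c ≤ m ≤ p + α·c. -/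
open Finset

variable {V : Type*} [Fintype V] [DecidableEq V]

/-- `m` is a `π`-milestone of span `α`: `|E^m_π| ≤ |E^i_π|` for every position `i` in
`[m − α, m + α] ∩ [0, n]`. -/
def IsMilestone (E : V → V → Prop) [DecidableRel E] (π : V ≃ Fin (Fintype.card V))
    (α m : ℕ) : Prop :=
  m ≤ Fintype.card V ∧
    ∀ i : ℕ, i ≤ Fintype.card V → m ≤ i + α → i ≤ m + α → cutSize E π m ≤ cutSize E π i

lemma milestone_aux (E : V → V → Prop) [DecidableRel E]
    (π : V ≃ Fin (Fintype.card V)) (α : ℕ) :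
    ∀ k p : ℕ, p ≤ Fintype.card V → cutSize E π p ≤ k →
      ∃ m : ℕ, IsMilestone E π α m ∧ p ≤ m + α * k ∧ m ≤ p + α * k := by
  intro k
  induction k with
  | zero =>
    intro p hp hc
    exact ⟨p, ⟨hp, fun i hi _ _ => by omega⟩, by omega, by omega⟩
  | succ k ih =>
    intro p hp hc
    by_cases h : IsMilestone E π α p
    · exact ⟨p, h, by omega, by omega⟩
    · simp only [IsMilestone, not_and, not_forall] at h
      obtain ⟨i, hi, h1, h2, h3⟩ := h hp
      obtain ⟨m, hm, hm1, hm2⟩ := ih i hi (by omega)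
      refine ⟨m, hm, ?_, ?_⟩ <;> · rw [Nat.mul_succ]; omega

/-- In an ordering of width at most `c` of a finite simple digraph,
every position `p` is within distance `α · c` of some milestone of span `α`. -/
theorem milestone_nearby (E : V → V → Prop) [DecidableRel E]
    (hirr : ∀ v : V, ¬ E v v)
    (c : ℕ) (π : V ≃ Fin (Fintype.card V)) (hw : widthOf E π ≤ c)
    (p : ℕ) (hp : p ≤ Fintype.card V) (α : ℕ) :
    ∃ m : ℕ, IsMilestone E π α m ∧ p ≤ m + α * c ∧ m ≤ p + α * c := by
  have hcp : cutSize E π p ≤ c :=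
    le_trans (Finset.le_sup (by simp [Nat.lt_succ_iff, hp] : p ∈ Finset.range (Fintype.card V + 1))) hw
  exact milestone_aux E π α c p hp hcp
end

section
/- Let k and α be nonnegative integers and let T = (V, ω) be a fractional tournament. If T contains a (2k+1, α)-degree tangle, i.e., a set W ⊆ V with |W| ≥ 2k + 1 such that |ω⁻(u) − ω⁻(v)| ≤ α for all u, v ∈ W, then ctw(T) ≥ k(k + 1 − α)/2. -/
open Finset

variable {V : Type*} [Fintype V] [DecidableEq V]

set_option maxHeartbeats 1000000 in
lemma fin_filter_lt_card (m k : ℕ) (h : k ≤ m) :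
    (univ.filter fun i : Fin m => (i : ℕ) < k).card = k := by
  have : (univ.filter fun i : Fin m => (i : ℕ) < k) =
      (univ : Finset (Fin k)).image (Fin.castLE h) := by
    ext j
    simp only [mem_filter, mem_univ, true_and, mem_image]
    constructor
    · intro hj; exact ⟨⟨(j : ℕ), hj⟩, by ext; simp⟩
    · rintro ⟨i, -, rfl⟩; exact i.isLt
  rw [this, card_image_of_injective _ (Fin.castLE_injective h)]
  simp

lemma wInDeg_sum_pairs (ω : V → V → ℝ)
    (hzero : ∀ u : V, ω u u = 0)
    (hsum : ∀ u v : V, u ≠ v → ω u v + ω v u = 1) (S : Finset V) :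
    ∑ x ∈ S, ∑ y ∈ S, ω x y = (S.card : ℝ) * ((S.card : ℝ) - 1) / 2 := by
  have h2 : (∑ x ∈ S, ∑ y ∈ S, ω x y) + (∑ x ∈ S, ∑ y ∈ S, ω x y)
      = (S.card : ℝ) * ((S.card : ℝ) - 1) := by
    nth_rewrite 1 [Finset.sum_comm]
    rw [← Finset.sum_add_distrib]
    have key : ∀ x ∈ S, (∑ y ∈ S, ω y x + ∑ y ∈ S, ω x y) = ((S.card : ℝ) - 1) := by
      intro x hx
      rw [← Finset.sum_add_distrib]
      have h1 : ∀ y ∈ S, ω y x + ω x y = if y = x then 0 else 1 := by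
        intro y hy
        by_cases hxy : y = x
        · simp [hxy, hzero]
        · simp [hxy, hsum y x hxy]
      rw [Finset.sum_congr rfl h1, ← Finset.add_sum_erase S _ hx]
      simp only [if_pos rfl, zero_add]
      rw [Finset.sum_congr rfl (fun y hy => if_neg (Finset.ne_of_mem_erase hy)),
        Finset.sum_const, nsmul_eq_mul, mul_one, Finset.card_erase_of_mem hx]
      have : 1 ≤ S.card := Finset.card_pos.mpr ⟨x, hx⟩
      push_cast [Nat.cast_sub this]
      ring
    rw [Finset.sum_congr rfl key, Finset.sum_const, nsmul_eq_mul]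
  linarith

def posOf (π : V ≃ Fin (Fintype.card V)) (v : V) : ℕ := (π v : ℕ)

lemma wCut_eq_double (ω : V → V → ℝ) (π : V ≃ Fin (Fintype.card V)) (i : ℕ) :
    wCut ω π i
      = ∑ x ∈ univ.filter (fun v => ¬ ((π v : ℕ) < i)),
          ∑ y ∈ univ.filter (fun v => (π v : ℕ) < i), ω x y := by
  have h := Finset.filter_product (s := (univ : Finset V)) (t := (univ : Finset V))
    (fun v => i ≤ (π v : ℕ)) (fun v => (π v : ℕ) < i)
  rw [Finset.univ_product_univ] at h
  unfold wCut
  rw [← Finset.sum_product']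
  have h2 : (univ.filter (fun v : V => ¬ ((π v : ℕ) < i)))
      = univ.filter (fun v => i ≤ (π v : ℕ)) := by
    apply Finset.filter_congr; intro x _; simp [not_lt]
  rw [h2]
  congr 1

lemma wCut_eq_double' (ω : V → V → ℝ) (π : V ≃ Fin (Fintype.card V)) (i : ℕ) :
    wCut ω π i
      = ∑ x ∈ univ.filter (fun v => ¬ (posOf π v < i)),
          ∑ y ∈ univ.filter (fun v => posOf π v < i), ω x y := by
  unfold posOf
  exact wCut_eq_double ω π i

theorem width_lower (ω : V → V → ℝ)
    (hzero : ∀ u : V, ω u u = 0)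
    (hsum : ∀ u v : V, u ≠ v → ω u v + ω v u = 1)
    (hnonneg : ∀ u v : V, 0 ≤ ω u v)
    (k α : ℕ) (W : Finset V) (hWcard : 2 * k + 1 ≤ W.card)
    (htangle : ∀ u ∈ W, ∀ v ∈ W, |wInDeg ω u - wInDeg ω v| ≤ (α : ℝ))
    (π : V ≃ Fin (Fintype.card V)) :
    (k : ℝ) * ((k : ℝ) + 1 - (α : ℝ)) / 2 ≤ wWidth ω π := by
  classical
  have hone : ∀ u v : V, ω u v ≤ 1 := by
    intro u v
    by_cases huv : u = v
    · rw [huv, hzero]; norm_num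
    · have := hsum u v huv; have := hnonneg v u; linarith
  -- the zero cut
  have hcut0 : wCut ω π 0 = 0 := by
    unfold wCut
    rw [Finset.filter_false_of_mem, Finset.sum_empty]
    intro p _; simp
  have hw0 : (0 : ℝ) ≤ wWidth ω π := by
    have := Finset.le_sup' (wCut ω π)
      (Finset.mem_range.mpr (Nat.succ_pos (Fintype.card V)))
    rw [hcut0] at this; exact this
  rcases Nat.eq_zero_or_pos k with hk0 | hkpos
  · subst hk0; simpa using hw0
  obtain ⟨k', rfl⟩ : ∃ k', k = k' + 1 := ⟨k - 1, (Nat.succ_pred_eq_of_pos hkpos).symm⟩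
  set k := k' + 1 with hkdef
  -- positions
  have hposinj : Function.Injective (posOf π) := by
    intro a b hab
    exact π.injective (Fin.val_injective hab)
  have hposlt : ∀ v, posOf π v < Fintype.card V := fun v => (π v).isLt
  set P : Finset ℕ := W.image (posOf π) with hP
  have hPcard : P.card = W.card := Finset.card_image_of_injective W hposinj
  set m := P.card with hm
  have hmW : 2 * k + 1 ≤ m := by rw [hPcard]; exact hWcard
  have hk'm : k' < m := by omega
  have hkm : k < m := by omega
  set e := P.orderEmbOfFin (rfl : P.card = m) with he
  set p : ℕ := e ⟨k', hk'm⟩ with hpdef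
  set q : ℕ := e ⟨k, hkm⟩ with hqdef
  have hpq : p < q := by
    apply e.strictMono
    exact Fin.mk_lt_mk.mpr (by omega)
  have hpP : p ∈ P := Finset.orderEmbOfFin_mem P rfl _
  have hqP : q ∈ P := Finset.orderEmbOfFin_mem P rfl _
  have hmemlt : ∀ x ∈ P, x < Fintype.card V := by
    intro x hx
    rw [hP] at hx
    obtain ⟨v, -, rfl⟩ := Finset.mem_image.mp hx
    exact hposlt v
  set i1 : ℕ := p + 1 with hi1
  set i2 : ℕ := q + 1 with hi2
  have hi1n : i1 ≤ Fintype.card V := hmemlt p hpP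
  have hi2n : i2 ≤ Fintype.card V := hmemlt q hqP
  -- prefix sets
  set A1 := univ.filter (fun v : V => posOf π v < i1) with hA1
  set A2 := univ.filter (fun v : V => posOf π v < i2) with hA2
  set B1 := univ.filter (fun v : V => ¬ (posOf π v < i1)) with hB1
  set B2 := univ.filter (fun v : V => ¬ (posOf π v < i2)) with hB2
  -- W1
  have himg1 : (W.filter (fun v => posOf π v < i1)).image (posOf π) = P.filter (fun x => x < i1) := by
    rw [hP, Finset.filter_image]
  have hW1big : k ≤ (W.filter (fun v => posOf π v < i1)).card := by
    have hsub : (univ.filter fun i : Fin m => (i : ℕ) < k).image (fun i => (e i : ℕ))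
        ⊆ P.filter (fun x => x < i1) := by
      intro x hx
      obtain ⟨i, hi, rfl⟩ := Finset.mem_image.mp hx
      rw [Finset.mem_filter] at hi ⊢
      refine ⟨Finset.orderEmbOfFin_mem P rfl i, ?_⟩
      have : e i ≤ p := by
        rw [hpdef]
        exact e.monotone (by rw [Fin.le_def]; simp; omega)
      omega
    have hcard : ((univ.filter fun i : Fin m => (i : ℕ) < k).image
        (fun i => (e i : ℕ))).card = k := by
      rw [Finset.card_image_of_injective _ (fun a b hab => e.injective hab),
        fin_filter_lt_card m k (le_of_lt hkm)]
    calc k = _ := hcard.symm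
      _ ≤ (P.filter (fun x => x < i1)).card := Finset.card_le_card hsub
      _ = ((W.filter (fun v => posOf π v < i1)).image (posOf π)).card := by rw [himg1]
      _ = (W.filter (fun v => posOf π v < i1)).card :=
          Finset.card_image_of_injective _ hposinj
  obtain ⟨W1, hW1sub, hW1card⟩ := Finset.exists_subset_card_eq hW1big
  have hW1W : W1 ⊆ W := hW1sub.trans (Finset.filter_subset _ _)
  have hW1A : W1 ⊆ A1 := by
    intro x hx
    have := hW1sub hx
    rw [Finset.mem_filter] at this
    rw [hA1, Finset.mem_filter]
    exact ⟨Finset.mem_univ _, this.2⟩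
  -- W2
  have hW2big : k ≤ (W.filter (fun v => ¬ (posOf π v < i2))).card := by
    have himg2 : (W.filter (fun v => ¬ (posOf π v < i2))).image (posOf π)
        = P.filter (fun x => ¬ (x < i2)) := by
      rw [hP, Finset.filter_image]
    have hle : (P.filter (fun x => x < i2)).card ≤ k + 1 := by
      have hsub : P.filter (fun x => x < i2)
          ⊆ (univ.filter fun i : Fin m => (i : ℕ) < k + 1).image
            (fun i => (e i : ℕ)) := by
        intro x hx
        rw [Finset.mem_filter] at hx
        obtain ⟨hxP, hxlt⟩ := hx
        have hxr : x ∈ Set.range ⇑e := by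
          rw [Finset.range_orderEmbOfFin]; exact hxP
        obtain ⟨i, rfl⟩ := hxr
        refine Finset.mem_image.mpr ⟨i, ?_, rfl⟩
        rw [Finset.mem_filter]
        refine ⟨Finset.mem_univ _, ?_⟩
        have : e i ≤ e ⟨k, hkm⟩ := by omega
        have := e.le_iff_le.mp this
        rw [Fin.le_def] at this
        simp only [] at this
        omega
      calc (P.filter (fun x => x < i2)).card
          ≤ _ := Finset.card_le_card hsub
        _ ≤ (univ.filter fun i : Fin m => (i : ℕ) < k + 1).card :=
            Finset.card_image_le
        _ = k + 1 := fin_filter_lt_card m (k+1) (by omega)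
    have htot := Finset.card_filter_add_card_filter_not
      (s := P) (p := fun x => x < i2)
    have : (P.filter (fun x => ¬ (x < i2))).card ≥ k := by omega
    calc k ≤ (P.filter (fun x => ¬ (x < i2))).card := this
      _ = ((W.filter (fun v => ¬ (posOf π v < i2))).image (posOf π)).card := by rw [himg2]
      _ = (W.filter (fun v => ¬ (posOf π v < i2))).card :=
          Finset.card_image_of_injective _ hposinj
  obtain ⟨W2, hW2sub, hW2card⟩ := Finset.exists_subset_card_eq hW2big
  have hW2W : W2 ⊆ W := hW2sub.trans (Finset.filter_subset _ _)
  have hW2B : W2 ⊆ B2 := by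
    intro x hx
    have := hW2sub hx
    rw [Finset.mem_filter] at this
    rw [hB2, Finset.mem_filter]
    exact ⟨Finset.mem_univ _, this.2⟩
  have hW2notA : ∀ x ∈ W2, x ∉ A2 := by
    intro x hx hxA
    have h1 := hW2B hx
    rw [hB2, Finset.mem_filter] at h1
    rw [hA2, Finset.mem_filter] at hxA
    exact h1.2 hxA.2
  -- prefix set inclusions and cards
  have hcutd1 : wCut ω π i1 = ∑ x ∈ B1, ∑ y ∈ A1, ω x y := by
    rw [hB1, hA1]; exact wCut_eq_double' ω π i1
  have hcutd2 : wCut ω π i2 = ∑ x ∈ B2, ∑ y ∈ A2, ω x y := by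
    rw [hB2, hA2]; exact wCut_eq_double' ω π i2
  have hA1A2 : A1 ⊆ A2 := by
    intro x hx
    rw [hA1, Finset.mem_filter] at hx
    rw [hA2, Finset.mem_filter]
    exact ⟨hx.1, by omega⟩
  have hqlt : q < Fintype.card V := hmemlt q hqP
  have hqval : posOf π (π.symm ⟨q, hqlt⟩) = q := by simp [posOf]
  have hmem2 : π.symm ⟨q, hqlt⟩ ∈ A2 := by
    rw [hA2, Finset.mem_filter]
    exact ⟨Finset.mem_univ _, by omega⟩
  have hmem1 : π.symm ⟨q, hqlt⟩ ∉ A1 := by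
    rw [hA1, Finset.mem_filter, hqval]
    simp only [Finset.mem_univ, true_and]
    omega
  have hA12 : A1.card < A2.card :=
    Finset.card_lt_card ((Finset.ssubset_iff_of_subset hA1A2).mpr ⟨_, hmem2, hmem1⟩)
  have hkA1 : k ≤ A1.card := by
    rw [← hW1card]; exact Finset.card_le_card hW1A
  -- pair-sum values
  have hT1 : ∑ x ∈ W1, ∑ y ∈ W1, ω x y = (k : ℝ) * ((k : ℝ) - 1) / 2 := by
    rw [wInDeg_sum_pairs ω hzero hsum W1, hW1card]
  have hT2 : ∑ x ∈ W2, ∑ y ∈ W2, ω x y = (k : ℝ) * ((k : ℝ) - 1) / 2 := by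
    rw [wInDeg_sum_pairs ω hzero hsum W2, hW2card]
  -- cut bound 1
  have hcut1 : (∑ y ∈ W1, wInDeg ω y) - (k : ℝ) * ((A1.card : ℝ) - (k : ℝ))
      - (∑ x ∈ W1, ∑ y ∈ W1, ω x y) ≤ wCut ω π i1 := by
    rw [hcutd1]
    have hstep1 : ∑ y ∈ W1, ∑ x ∈ B1, ω x y ≤ ∑ y ∈ A1, ∑ x ∈ B1, ω x y :=
      Finset.sum_le_sum_of_subset_of_nonneg hW1A
        (fun i _ _ => Finset.sum_nonneg fun j _ => hnonneg j i)
    refine le_trans ?_ (le_trans hstep1 (le_of_eq Finset.sum_comm))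
    have hyeq : ∀ y ∈ W1, ∑ x ∈ B1, ω x y = wInDeg ω y - ∑ x ∈ A1, ω x y := by
      intro y _
      have hsplit := Finset.sum_filter_add_sum_filter_not univ
        (fun v => posOf π v < i1) (fun x => ω x y)
      rw [← hA1, ← hB1] at hsplit
      have huniv : ∑ x ∈ univ, ω x y = wInDeg ω y := rfl
      rw [huniv] at hsplit
      linarith
    rw [Finset.sum_congr rfl hyeq, Finset.sum_sub_distrib]
    have hsdiff : ∀ y ∈ W1, ∑ x ∈ A1, ω x y
        = (∑ x ∈ A1 \ W1, ω x y) + ∑ x ∈ W1, ω x y :=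
      fun y _ => (Finset.sum_sdiff hW1A).symm
    rw [Finset.sum_congr rfl hsdiff, Finset.sum_add_distrib]
    have hsw : ∑ y ∈ W1, ∑ x ∈ W1, ω x y = ∑ x ∈ W1, ∑ y ∈ W1, ω x y :=
      Finset.sum_comm
    have hbd : ∑ y ∈ W1, ∑ x ∈ A1 \ W1, ω x y ≤ (k : ℝ) * ((A1.card : ℝ) - (k : ℝ)) := by
      have hinner : ∀ y ∈ W1, ∑ x ∈ A1 \ W1, ω x y ≤ (A1.card : ℝ) - (k : ℝ) := by
        intro y _
        have h1 : ∑ x ∈ A1 \ W1, ω x y ≤ (A1 \ W1).card • (1 : ℝ) :=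
          Finset.sum_le_card_nsmul _ _ 1 (fun x _ => hone x y)
        rw [nsmul_eq_mul, mul_one] at h1
        have h2 : (A1 \ W1).card = A1.card - W1.card := Finset.card_sdiff_of_subset hW1A
        have h3 : ((A1.card - W1.card : ℕ) : ℝ) = (A1.card : ℝ) - (k : ℝ) := by
          rw [Nat.cast_sub (Finset.card_le_card hW1A), hW1card]
        rw [h2, h3] at h1
        exact h1
      have := Finset.sum_le_card_nsmul W1 _ ((A1.card : ℝ) - (k : ℝ)) hinner
      rw [hW1card, nsmul_eq_mul] at this
      exact this
    linarith
  -- cut bound 2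
  have hcut2 : (k : ℝ) * (A2.card : ℝ) - (∑ x ∈ W2, wInDeg ω x)
      + (∑ x ∈ W2, ∑ y ∈ W2, ω x y) ≤ wCut ω π i2 := by
    rw [hcutd2]
    have hstep : ∑ x ∈ W2, ∑ y ∈ A2, ω x y ≤ ∑ x ∈ B2, ∑ y ∈ A2, ω x y :=
      Finset.sum_le_sum_of_subset_of_nonneg hW2B
        (fun i _ _ => Finset.sum_nonneg fun j _ => hnonneg i j)
    refine le_trans ?_ hstep
    have hx : ∀ x ∈ W2, (A2.card : ℝ) - wInDeg ω x + ∑ y ∈ W2, ω y x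
        ≤ ∑ y ∈ A2, ω x y := by
      intro x hxW
      have hxA : x ∉ A2 := hW2notA x hxW
      have h1 : ∑ y ∈ A2, ω x y = (A2.card : ℝ) - ∑ y ∈ A2, ω y x := by
        have hterm : ∀ y ∈ A2, ω x y = 1 - ω y x := by
          intro y hy
          have hxy : x ≠ y := fun h => hxA (h ▸ hy)
          linarith [hsum x y hxy]
        rw [Finset.sum_congr rfl hterm, Finset.sum_sub_distrib,
          Finset.sum_const, nsmul_eq_mul, mul_one]
      have h2 : ∑ y ∈ A2, ω y x ≤ wInDeg ω x - ∑ y ∈ W2, ω y x := by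
        have hsplit := Finset.sum_filter_add_sum_filter_not univ
          (fun v => posOf π v < i2) (fun y => ω y x)
        rw [← hA2, ← hB2] at hsplit
        have huniv : ∑ y ∈ univ, ω y x = wInDeg ω x := rfl
        rw [huniv] at hsplit
        have hw2b : ∑ y ∈ W2, ω y x ≤ ∑ y ∈ B2, ω y x :=
          Finset.sum_le_sum_of_subset_of_nonneg hW2B (fun j _ _ => hnonneg j x)
        linarith
      linarith
    have hsum2 := Finset.sum_le_sum hx
    have hlhs : ∑ x ∈ W2, ((A2.card : ℝ) - wInDeg ω x + ∑ y ∈ W2, ω y x)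
        = (k : ℝ) * (A2.card : ℝ) - (∑ x ∈ W2, wInDeg ω x)
          + (∑ x ∈ W2, ∑ y ∈ W2, ω x y) := by
      rw [Finset.sum_add_distrib, Finset.sum_sub_distrib, Finset.sum_const,
        nsmul_eq_mul, hW2card]
      have hswap : ∑ x ∈ W2, ∑ y ∈ W2, ω y x = ∑ x ∈ W2, ∑ y ∈ W2, ω x y :=
        Finset.sum_comm
      rw [hswap]
    rw [← hlhs]
    exact hsum2
  -- width bounds
  have hwc1 : wCut ω π i1 ≤ wWidth ω π :=
    Finset.le_sup' (wCut ω π) (Finset.mem_range.mpr (by omega))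
  have hwc2 : wCut ω π i2 ≤ wWidth ω π :=
    Finset.le_sup' (wCut ω π) (Finset.mem_range.mpr (by omega))
  -- degree bounds
  have hWne : W.Nonempty := Finset.card_pos.mp (by omega)
  obtain ⟨u0, hu0W, hu0min⟩ := Finset.exists_min_image W (wInDeg ω) hWne
  have hS1 : (k : ℝ) * wInDeg ω u0 ≤ ∑ y ∈ W1, wInDeg ω y := by
    have := Finset.card_nsmul_le_sum W1 (wInDeg ω) (wInDeg ω u0)
      (fun y hy => hu0min y (hW1W hy))
    rw [hW1card, nsmul_eq_mul] at this
    exact this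
  have hS2 : ∑ x ∈ W2, wInDeg ω x ≤ (k : ℝ) * (wInDeg ω u0 + (α : ℝ)) := by
    have hb : ∀ x ∈ W2, wInDeg ω x ≤ wInDeg ω u0 + (α : ℝ) := by
      intro x hxW
      have := (abs_le.mp (htangle x (hW2W hxW) u0 hu0W)).2
      linarith
    have := Finset.sum_le_card_nsmul W2 (wInDeg ω) _ hb
    rw [hW2card, nsmul_eq_mul] at this
    exact this
  -- cards product
  have hA12R : ((A1.card : ℝ)) + 1 ≤ (A2.card : ℝ) := by exact_mod_cast hA12
  have hprod : (k : ℝ) * ((A1.card : ℝ) + 1) ≤ (k : ℝ) * (A2.card : ℝ) :=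
    mul_le_mul_of_nonneg_left hA12R (Nat.cast_nonneg k)
  nlinarith [hcut1, hcut2, hwc1, hwc2, hS1, hS2, hT1, hT2, hprod]

/-- If a fractional tournament contains a `(2k+1, α)`-degree tangle,
then its cutwidth is at least `k(k + 1 − α)/2`. -/
theorem degree_tangle_cutwidth_lower_bound (ω : V → V → ℝ)
    (hzero : ∀ u : V, ω u u = 0)
    (hsum : ∀ u v : V, u ≠ v → ω u v + ω v u = 1)
    (hnonneg : ∀ u v : V, 0 ≤ ω u v)
    (k α : ℕ) (W : Finset V) (hWcard : 2 * k + 1 ≤ W.card)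
    (htangle : ∀ u ∈ W, ∀ v ∈ W, |wInDeg ω u - wInDeg ω v| ≤ (α : ℝ)) :
    (k : ℝ) * ((k : ℝ) + 1 - (α : ℝ)) / 2 ≤ wCutwidth ω := by
  apply le_csInf
  · exact ⟨wWidth ω (Fintype.equivFin V), Fintype.equivFin V, rfl⟩
  · rintro b ⟨π, rfl⟩
    exact width_lower ω hzero hsum hnonneg k α W hWcard htangle π
end

section
/- Let D be a finite simple digraph, let P be the set of pure vertices of D, and let π^P be any ordering of P sorted by in-degree in D (i.e., for u, v ∈ P, if d⁻_D(u) < d⁻_D(v) then π^P(u) < π^P(v)). Then there exist a vertex ordering π of D with ctw(D, π) = ctw(D) whose restriction to P equals π^P, and a vertex ordering π' of D with OLA(D, π') = OLA(D) whose restriction to P equals π^P. -/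
open Finset

variable {V : Type*} [Fintype V] [DecidableEq V]

section Aux
variable {V : Type*} [Fintype V] [DecidableEq V]

def eInd (E : V → V → Prop) [DecidableRel E] (a b : V) : ℤ := if E a b then 1 else 0

lemma cutSize_eq_sum (E : V → V → Prop) [DecidableRel E]
    (π : V ≃ Fin (Fintype.card V)) (i : ℕ) :
    (cutSize E π i : ℤ) =
      ∑ a : V, ∑ b : V, eInd E a b * (if i ≤ (π a : ℕ) then 1 else 0) *
        (if (π b : ℕ) < i then 1 else 0) := by
  rw [cutSize, cutFinset, Finset.card_filter]
  push_cast
  rw [Fintype.sum_prod_type]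
  refine Finset.sum_congr rfl fun a _ => Finset.sum_congr rfl fun b _ => ?_
  simp only [eInd]
  split_ifs <;> simp_all

lemma inDeg_eq_sum (E : V → V → Prop) [DecidableRel E] (x : V) :
    (inDeg E x : ℤ) = ∑ b : V, eInd E b x := by
  rw [inDeg, Finset.card_filter]
  push_cast
  rfl


lemma cutSize_swap (E : V → V → Prop) [DecidableRel E] (hirr : ∀ v : V, ¬ E v v)
    (u v : V) (huv : u ≠ v)
    (hu : ∀ w, w ≠ u → (E u w ↔ ¬ E w u))
    (hv : ∀ w, w ≠ v → (E v w ↔ ¬ E w v))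
    (π : V ≃ Fin (Fintype.card V)) (i : ℕ)
    (h1 : (π v : ℕ) < i) (h2 : i ≤ (π u : ℕ)) :
    (cutSize E ((Equiv.swap u v).trans π) i : ℤ)
      = cutSize E π i + inDeg E u - inDeg E v := by
  classical
  set e : V → V → ℤ := eInd E with he
  set s : V → ℤ := fun a => if i ≤ (π a : ℕ) then 1 else 0 with hs
  set d : V → ℤ := fun a => (if a = v then 1 else 0) - (if a = u then 1 else 0) with hd
  have su : s u = 1 := by simp [hs, h2]
  have sv : s v = 0 := by simp [hs, not_le.mpr h1]
  have euu : e u u = 0 := by simp [he, eInd, hirr u]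
  have evv : e v v = 0 := by simp [he, eInd, hirr v]
  have epu : ∀ b, b ≠ u → e u b = 1 - e b u := by
    intro b hb
    simp only [he, eInd]
    by_cases h : E b u
    · rw [if_pos h, if_neg (fun h2 => ((hu b hb).mp h2) h)]; norm_num
    · rw [if_neg h, if_pos ((hu b hb).mpr h)]; norm_num
  have epv : ∀ b, b ≠ v → e v b = 1 - e b v := by
    intro b hb
    simp only [he, eInd]
    by_cases h : E b v
    · rw [if_pos h, if_neg (fun h2 => ((hv b hb).mp h2) h)]; norm_num
    · rw [if_neg h, if_pos ((hv b hb).mpr h)]; norm_num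
  have sum_d : ∀ f : V → ℤ, ∑ a : V, d a * f a = f v - f u := by
    intro f
    simp only [hd, sub_mul, ite_mul, one_mul, zero_mul]
    rw [Finset.sum_sub_distrib]
    simp [Finset.sum_ite_eq']
  have du : d u = -1 := by simp [hd, huv]
  have dv : d v = 1 := by simp [hd, Ne.symm huv]
  have dw : ∀ a, a ≠ u → a ≠ v → d a = 0 := by intro a h h'; simp [hd, h, h']
  have hswap_hi : ∀ a : V,
      (if i ≤ ((((Equiv.swap u v).trans π) a : Fin (Fintype.card V)) : ℕ) then (1:ℤ) else 0)
        = s a + d a := by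
    intro a
    simp only [Equiv.trans_apply]
    by_cases hau : a = u
    · simp only [hau, Equiv.swap_apply_left]
      rw [su, du, if_neg (not_le.mpr h1)]
      norm_num
    · by_cases hav : a = v
      · simp only [hav, Equiv.swap_apply_right]
        rw [sv, dv, if_pos h2]
        norm_num
      · simp only [Equiv.swap_apply_of_ne_of_ne hau hav]
        rw [dw a hau hav, hs]
        norm_num
  have hswap_lo : ∀ a : V,
      (if ((((Equiv.swap u v).trans π) a : Fin (Fintype.card V)) : ℕ) < i then (1:ℤ) else 0)
        = 1 - (s a + d a) := by
    intro a
    rw [← hswap_hi a]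
    split_ifs with p q q <;> omega
  have hlo : ∀ a : V, (if ((π a : Fin (Fintype.card V)) : ℕ) < i then (1:ℤ) else 0) = 1 - s a := by
    intro a
    simp only [hs]
    split_ifs with p q q <;> omega
  rw [cutSize_eq_sum, cutSize_eq_sum, inDeg_eq_sum, inDeg_eq_sum]
  simp only [hswap_hi, hswap_lo, hlo, ← he, ← hs]
  have hrow : ∀ a : V, ∑ b : V, e a b * (s a + d a) * (1 - (s b + d b)) =
      (∑ b : V, e a b * s a * (1 - s b)) + d a * (∑ b : V, e a b * (1 - s b))
        - s a * (∑ b : V, d b * e a b) - d a * (∑ b : V, d b * e a b) := by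
    intro a
    simp only [Finset.mul_sum]
    rw [← Finset.sum_add_distrib, ← Finset.sum_sub_distrib, ← Finset.sum_sub_distrib]
    exact Finset.sum_congr rfl fun b _ => by ring
  simp only [hrow]
  rw [Finset.sum_sub_distrib, Finset.sum_sub_distrib, Finset.sum_add_distrib]
  have hinner : ∀ a : V, ∑ b : V, d b * e a b = e a v - e a u := fun a => sum_d _
  simp only [hinner]
  rw [sum_d (fun a => ∑ b : V, e a b * (1 - s b)), sum_d (fun a => e a v - e a u)]
  have key : ∑ b : V, (e v b * (1 - s b) - e u b * (1 - s b) - s b * (e b v - e b u) - e b u + e b v)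
      = -(e u v + e v u) := by
    have hcombine : ∀ b : V,
        e v b * (1 - s b) - e u b * (1 - s b) - s b * (e b v - e b u) - e b u + e b v
          = if b = v then -(e u v + e v u) else 0 := by
      intro b
      rcases eq_or_ne b v with hbv | hbv
      · rw [if_pos hbv, hbv, evv, sv]
        ring
      · rw [if_neg hbv]
        rcases eq_or_ne b u with hbu | hbu
        · rw [hbu, euu, su, epv u huv]
          ring
        · rw [epv b hbv, epu b hbu]
          ring
    rw [Finset.sum_congr rfl fun b _ => hcombine b]
    simp [Finset.sum_ite_eq']
  rw [Finset.sum_add_distrib, Finset.sum_sub_distrib, Finset.sum_sub_distrib,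
    Finset.sum_sub_distrib] at key
  linarith
lemma cutSize_swap_eq (E : V → V → Prop) [DecidableRel E] (u v : V)
    (π : V ≃ Fin (Fintype.card V)) (i : ℕ)
    (hside : ((π u : ℕ) < i ↔ (π v : ℕ) < i)) :
    cutSize E ((Equiv.swap u v).trans π) i = cutSize E π i := by
  have hside' : (i ≤ (π u : ℕ)) ↔ (i ≤ (π v : ℕ)) := by
    rw [← not_lt, ← not_lt]; exact not_congr hside
  have hpoint : ∀ a : V,
      (i ≤ ((((Equiv.swap u v).trans π) a : Fin (Fintype.card V)) : ℕ)) ↔ i ≤ ((π a : Fin (Fintype.card V)) : ℕ) := by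
    intro a
    simp only [Equiv.trans_apply]
    by_cases hau : a = u
    · rw [hau, Equiv.swap_apply_left]; exact hside'.symm
    · by_cases hav : a = v
      · rw [hav, Equiv.swap_apply_right]; exact hside'
      · rw [Equiv.swap_apply_of_ne_of_ne hau hav]
  have hpoint2 : ∀ a : V,
      (((((Equiv.swap u v).trans π) a : Fin (Fintype.card V)) : ℕ) < i) ↔ ((π a : Fin (Fintype.card V)) : ℕ) < i := by
    intro a
    rw [← not_le, ← not_le]
    exact not_congr (hpoint a)
  unfold cutSize cutFinset
  congr 1
  ext p
  simp only [Finset.mem_filter, Finset.mem_univ, true_and]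
  rw [hpoint p.1, hpoint2 p.2]

lemma cutSize_swap_le (E : V → V → Prop) [DecidableRel E] (hirr : ∀ v : V, ¬ E v v)
    (u v : V) (huv : u ≠ v)
    (hu : ∀ w, w ≠ u → (E u w ↔ ¬ E w u))
    (hv : ∀ w, w ≠ v → (E v w ↔ ¬ E w v))
    (hdeg : inDeg E u ≤ inDeg E v)
    (π : V ≃ Fin (Fintype.card V)) (hpos : (π v : ℕ) < (π u : ℕ)) (i : ℕ) :
    cutSize E ((Equiv.swap u v).trans π) i ≤ cutSize E π i := by
  by_cases hc : (π v : ℕ) < i ∧ i ≤ (π u : ℕ)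
  · have := cutSize_swap E hirr u v huv hu hv π i hc.1 hc.2
    omega
  · rw [cutSize_swap_eq]
    push_neg at hc
    by_cases hvi : (π v : ℕ) < i
    · exact iff_of_true (hc hvi) hvi
    · exact iff_of_false (by omega) hvi
lemma sortLemma (E : V → V → Prop) [DecidableRel E] (hirr : ∀ v : V, ¬ E v v)
    (P : Finset V)
    (hP : ∀ v : V, v ∈ P ↔ ∀ u : V, u ≠ v → (E v u ↔ ¬ E u v))
    (πP : {x // x ∈ P} ≃ Fin (Fintype.card {x // x ∈ P}))
    (hsorted : ∀ u v : {x // x ∈ P}, inDeg E u.1 < inDeg E v.1 → πP u < πP v) :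
    ∀ (N : ℕ) (π : V ≃ Fin (Fintype.card V)),
      (Finset.univ.filter (fun q : {x // x ∈ P} × {x // x ∈ P} =>
          πP q.1 < πP q.2 ∧ π q.2.1 < π q.1.1)).card ≤ N →
      ∃ τ : V ≃ Fin (Fintype.card V),
        (∀ i, cutSize E τ i ≤ cutSize E π i) ∧
        ∀ u v : {x // x ∈ P}, πP u < πP v ↔ τ u.1 < τ v.1 := by
  intro N
  induction N with
  | zero =>
    intro π hcard
    have h0 : (Finset.univ.filter (fun q : {x // x ∈ P} × {x // x ∈ P} =>
        πP q.1 < πP q.2 ∧ π q.2.1 < π q.1.1)) = ∅ :=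
      Finset.card_eq_zero.mp (Nat.le_zero.mp hcard)
    have fwd : ∀ a b : {x // x ∈ P}, πP a < πP b → π a.1 < π b.1 := by
      intro a b h
      have hnlt : ¬ π b.1 < π a.1 := by
        intro hlt
        have hm : (a, b) ∈ (Finset.univ.filter (fun q : {x // x ∈ P} × {x // x ∈ P} =>
            πP q.1 < πP q.2 ∧ π q.2.1 < π q.1.1)) :=
          Finset.mem_filter.mpr ⟨Finset.mem_univ _, h, hlt⟩
        rw [h0] at hm
        exact absurd hm (Finset.notMem_empty _)
      have hne : π a.1 ≠ π b.1 := by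
        intro he
        have hab : a = b := Subtype.ext (π.injective he)
        exact lt_irrefl _ (hab ▸ h)
      exact lt_of_le_of_ne (not_lt.mp hnlt) hne
    refine ⟨π, fun i => le_rfl, fun a b => ⟨fwd a b, fun h => ?_⟩⟩
    rcases lt_trichotomy (πP a) (πP b) with h1 | h1 | h1
    · exact h1
    · exact absurd h (by rw [πP.injective h1]; exact lt_irrefl _)
    · exact absurd h (lt_asymm (fwd b a h1))
  | succ N ih =>
    intro π hcard
    by_cases hle : (Finset.univ.filter (fun q : {x // x ∈ P} × {x // x ∈ P} =>
        πP q.1 < πP q.2 ∧ π q.2.1 < π q.1.1)).card ≤ N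
    · exact ih π hle
    · set Inv := Finset.univ.filter (fun q : {x // x ∈ P} × {x // x ∈ P} =>
        πP q.1 < πP q.2 ∧ π q.2.1 < π q.1.1) with hInv
      have hne : Inv.Nonempty := Finset.card_pos.mp (by omega)
      obtain ⟨q, hq, hmin⟩ := Finset.exists_min_image Inv
        (fun q => (π q.1.1 : ℕ) - (π q.2.1 : ℕ)) hne
      obtain ⟨u, v⟩ := q
      rw [hInv, Finset.mem_filter] at hq
      obtain ⟨-, hPuv, hpos⟩ := hq
      have hposn : (π v.1 : ℕ) < (π u.1 : ℕ) := hpos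
      have huv : u ≠ v := by rintro rfl; exact lt_irrefl _ hPuv
      have huv1 : u.1 ≠ v.1 := fun h => huv (Subtype.ext h)
      have hpu : ∀ w, w ≠ u.1 → (E u.1 w ↔ ¬ E w u.1) := (hP u.1).mp u.2
      have hpv : ∀ w, w ≠ v.1 → (E v.1 w ↔ ¬ E w v.1) := (hP v.1).mp v.2
      have hdeg : inDeg E u.1 ≤ inDeg E v.1 := by
        by_contra h
        exact absurd (hsorted v u (not_le.mp h)) (lt_asymm hPuv)
      have hnob : ∀ w : {x // x ∈ P}, w ≠ u → w ≠ v →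
          (π w.1 : ℕ) < (π v.1 : ℕ) ∨ (π u.1 : ℕ) < (π w.1 : ℕ) := by
        intro w hwu hwv
        by_contra hcon
        push_neg at hcon
        obtain ⟨hc1, hc2⟩ := hcon
        have hne1 : (π w.1 : ℕ) ≠ (π v.1 : ℕ) := fun h =>
          hwv (Subtype.ext (π.injective (Fin.val_injective h)))
        have hne2 : (π w.1 : ℕ) ≠ (π u.1 : ℕ) := fun h =>
          hwu (Subtype.ext (π.injective (Fin.val_injective h)))
        have h1 : (π v.1 : ℕ) < (π w.1 : ℕ) := by omega
        have h2 : (π w.1 : ℕ) < (π u.1 : ℕ) := by omega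
        have hwu' : πP w < πP u := by
          rcases lt_trichotomy (πP u) (πP w) with h3 | h3 | h3
          · have hmem : (u, w) ∈ Inv := by
              rw [hInv, Finset.mem_filter]
              exact ⟨Finset.mem_univ _, h3, Fin.lt_def.mpr h2⟩
            have := hmin _ hmem
            simp only at this
            omega
          · exact absurd (πP.injective h3).symm hwu
          · exact h3
        have hvw' : πP v < πP w := by
          rcases lt_trichotomy (πP w) (πP v) with h3 | h3 | h3
          · have hmem : (w, v) ∈ Inv := by
              rw [hInv, Finset.mem_filter]
              exact ⟨Finset.mem_univ _, h3, Fin.lt_def.mpr h1⟩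
            have := hmin _ hmem
            simp only at this
            omega
          · exact absurd (πP.injective h3) hwv
          · exact h3
        exact absurd (hPuv.trans (hvw'.trans hwu')) (lt_irrefl _)
      set σ := (Equiv.swap u.1 v.1).trans π with hσ
      have hcut : ∀ i, cutSize E σ i ≤ cutSize E π i :=
        fun i => cutSize_swap_le E hirr u.1 v.1 huv1 hpu hpv hdeg π hposn i
      have hσu : σ u.1 = π v.1 := by simp [hσ, Equiv.swap_apply_left]
      have hσv : σ v.1 = π u.1 := by simp [hσ, Equiv.swap_apply_right]
      have hσw : ∀ w : {x // x ∈ P}, w ≠ u → w ≠ v → σ w.1 = π w.1 := by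
        intro w hwu hwv
        simp [hσ, Equiv.swap_apply_of_ne_of_ne
          (fun h => hwu (Subtype.ext h)) (fun h => hwv (Subtype.ext h))]
      set Inv' := Finset.univ.filter (fun q : {x // x ∈ P} × {x // x ∈ P} =>
          πP q.1 < πP q.2 ∧ σ q.2.1 < σ q.1.1) with hInv'
      have hsub : Inv' ⊆ Inv := by
        intro q hq'
        obtain ⟨a, b⟩ := q
        rw [hInv', Finset.mem_filter] at hq'
        obtain ⟨-, hab, hlt⟩ := hq'
        rw [hInv, Finset.mem_filter]
        refine ⟨Finset.mem_univ _, hab, ?_⟩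
        by_cases hau : a = u
        · by_cases hbv : b = v
          · rw [hau, hbv, hσu, hσv] at hlt
            exact absurd hlt (lt_asymm hpos)
          · by_cases hbu : b = u
            · rw [hau, hbu] at hab
              exact absurd hab (lt_irrefl _)
            · rw [hau, hσu, hσw b hbu (fun h => hbv (by rw [h]))] at hlt
              rw [hau]
              exact hlt.trans hpos
        · by_cases hav : a = v
          · by_cases hbu : b = u
            · rw [hav, hbu] at hab
              exact absurd hab (lt_asymm hPuv)
            · by_cases hbv : b = v
              · rw [hav, hbv] at hab
                exact absurd hab (lt_irrefl _)
              · rw [hav, hσv, hσw b hbu hbv] at hlt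
                rw [hav]
                rcases hnob b hbu hbv with h | h
                · exact Fin.lt_def.mpr h
                · exact absurd (Fin.lt_def.mp hlt) (by omega)
          · by_cases hbu : b = u
            · rw [hbu, hσu, hσw a hau hav] at hlt
              rw [hbu]
              rcases hnob a hau hav with h | h
              · exact absurd (Fin.lt_def.mp hlt) (by omega)
              · exact Fin.lt_def.mpr h
            · by_cases hbv : b = v
              · rw [hbv, hσv, hσw a hau hav] at hlt
                rw [hbv]
                exact hpos.trans hlt
              · rw [hσw a hau hav, hσw b hbu hbv] at hlt
                exact hlt
      have hnotmem : (u, v) ∉ Inv' := by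
        rw [hInv', Finset.mem_filter]
        rintro ⟨-, -, hlt⟩
        rw [hσu, hσv] at hlt
        exact absurd hlt (lt_asymm hpos)
      have hmemInv : (u, v) ∈ Inv := by
        rw [hInv, Finset.mem_filter]
        exact ⟨Finset.mem_univ _, hPuv, hpos⟩
      have hss : Inv' ⊂ Inv := (Finset.ssubset_iff_of_subset hsub).mpr ⟨(u, v), hmemInv, hnotmem⟩
      have hcard' : Inv'.card ≤ N := by
        have h1 := Finset.card_lt_card hss
        omega
      obtain ⟨τ, hτ1, hτ2⟩ := ih σ hcard'
      exact ⟨τ, fun i => (hτ1 i).trans (hcut i), hτ2⟩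
end Aux

/-- Let `P` be the set of pure vertices of a finite simple digraph `D`
(vertices `v` such that for every other vertex `u` exactly one of the arcs `(v,u)`, `(u,v)`
is present), and let `π^P` be an ordering of `P` sorted by in-degree in `D`. Then some
cutwidth-optimal ordering of `D` restricts on `P` to `π^P`, and some OLA-optimal ordering
of `D` restricts on `P` to `π^P`. -/
theorem pure_vertices_sorted_in_optimal (E : V → V → Prop) [DecidableRel E]
    (hirr : ∀ v : V, ¬ E v v)
    (P : Finset V)
    (hP : ∀ v : V, v ∈ P ↔ ∀ u : V, u ≠ v → (E v u ↔ ¬ E u v))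
    (πP : {x // x ∈ P} ≃ Fin (Fintype.card {x // x ∈ P}))
    (hsorted : ∀ u v : {x // x ∈ P}, inDeg E u.1 < inDeg E v.1 → πP u < πP v) :
    (∃ π : V ≃ Fin (Fintype.card V), widthOf E π = cutwidth E ∧
        ∀ u v : {x // x ∈ P}, (πP u < πP v ↔ π u.1 < π v.1)) ∧
    (∃ π' : V ≃ Fin (Fintype.card V), olaOf E π' = ola E ∧
        ∀ u v : {x // x ∈ P}, (πP u < πP v ↔ π' u.1 < π' v.1)) := by
  classical
  constructor
  · have hne : {w | ∃ π : V ≃ Fin (Fintype.card V), widthOf E π = w}.Nonempty :=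
      ⟨widthOf E (Fintype.equivFin V), ⟨Fintype.equivFin V, rfl⟩⟩
    obtain ⟨π₀, h₀⟩ : ∃ π : V ≃ Fin (Fintype.card V), widthOf E π = cutwidth E :=
      Nat.sInf_mem hne
    obtain ⟨τ, hτ1, hτ2⟩ := sortLemma E hirr P hP πP hsorted _ π₀ le_rfl
    refine ⟨τ, le_antisymm ?_ (Nat.sInf_le ⟨τ, rfl⟩), hτ2⟩
    calc widthOf E τ ≤ widthOf E π₀ := Finset.sup_mono_fun (fun i _ => hτ1 i)
      _ = cutwidth E := h₀
  · have hne : {w | ∃ π : V ≃ Fin (Fintype.card V), olaOf E π = w}.Nonempty :=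
      ⟨olaOf E (Fintype.equivFin V), ⟨Fintype.equivFin V, rfl⟩⟩
    obtain ⟨π₀, h₀⟩ : ∃ π : V ≃ Fin (Fintype.card V), olaOf E π = ola E :=
      Nat.sInf_mem hne
    obtain ⟨τ, hτ1, hτ2⟩ := sortLemma E hirr P hP πP hsorted _ π₀ le_rfl
    refine ⟨τ, le_antisymm ?_ (Nat.sInf_le ⟨τ, rfl⟩), hτ2⟩
    calc olaOf E τ ≤ olaOf E π₀ := Finset.sum_le_sum (fun i _ => hτ1 i)
      _ = ola E := h₀
end
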